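/- arXiv:1311.4728 — 15 statements merged into one kernel-verified Lean document; each statement's English description precedes it below -/
import Mathlib

section
/- Let f : 2^X → ℝ be a nonnegative, monotone decreasing, supermodular function on a finite ground set X with total curvature at most c ∈ [0,1]. Then for every subset A ⊆ X, (1−c)·∑_{j∈A} f_∅(j) ≥ −f(X∖A). -/
/-- Lemma 2.2 (supermodular curvature lemma): if `f` is a nonnegative, monotone decreasing,
supermodular function on a finite ground set with total curvature at most `c ∈ [0,1]`, then
for every subset `A`, `(1-c)·∑_{j ∈ A} f_∅(j) ≥ -f(X∖A)`. -/
theorem stmt_1 {α : Type*} [Fintype α] [DecidableEq α]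
    (f : Finset α → ℝ) (c : ℝ) (hc0 : 0 ≤ c) (hc1 : c ≤ 1)
    (hnonneg : ∀ A : Finset α, 0 ≤ f A)
    (hmono : ∀ A B : Finset α, A ⊆ B → f B ≤ f A)
    (hsupmod : ∀ A B : Finset α, A ⊆ B → ∀ j, j ∉ B →
      f (insert j A) - f A ≤ f (insert j B) - f B)
    (hcurv : ∀ j : α,
      f Finset.univ - f (Finset.univ.erase j) ≤ (1 - c) * (f {j} - f ∅)) :
    ∀ A : Finset α,
      -f (Finset.univ \ A) ≤ (1 - c) * ∑ j ∈ A, (f {j} - f ∅) := by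
  have key : ∀ A : Finset α,
      f Finset.univ - f (Finset.univ \ A) ≤ (1 - c) * ∑ j ∈ A, (f {j} - f ∅) := by
    intro A
    induction A using Finset.induction_on with
    | empty => simp
    | @insert j A hj ih =>
      have hjm : j ∈ Finset.univ \ A := by simp [hj]
      have hins : insert j ((Finset.univ \ A).erase j) = Finset.univ \ A :=
        Finset.insert_erase hjm
      have hsub : (Finset.univ \ A).erase j ⊆ Finset.univ.erase j :=
        Finset.erase_subset_erase j (Finset.subset_univ _)
      have hstep := hsupmod _ _ hsub j (Finset.notMem_erase j _)
      rw [hins, Finset.insert_erase (Finset.mem_univ j)] at hstep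
      have hc := hcurv j
      rw [Finset.sum_insert hj, Finset.sdiff_insert, mul_add]
      linarith
  intro A
  have h := key A
  have h0 := hnonneg Finset.univ
  linarith
end

section
/- Let M be a matroid on a finite ground set and let A and B be two bases of M. Then there exists a bijection π : A → B such that (A ∖ {x}) ∪ {π(x)} is a base of M for every x ∈ A. -/
/-!
Match `A` to `B` along the bipartite relation "`x ∈ A` is related to `y ∈ B` when
`(A \ {x}) ∪ {y}` is a base", using Hall's marriage theorem. For `S ⊆ A`, every
`y ∈ B` outside `cl (A \ S)` can replace some element of `S`: independence of `A` gives
`cl (A \ S) = ⋂ x ∈ S, cl (A \ {x})`. At most `|A \ S|` elements of the independent set `B`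
lie in `cl (A \ S)`, so at least `|B| - |A \ S| = |S|` elements of `B` are neighbours of `S`.
-/

open Set

namespace Set

variable {α β : Type*}

-- One type for domain and codomain: a function `α → β` need not exist when `β` is empty.
theorem exists_injOn_mem_of_ncard_le_ncard_biUnion {s : Set α} (N : α → Set α)
    (hN : ∀ x ∈ s, (N x).Finite) (hall : ∀ t ⊆ s, t.ncard ≤ (⋃ x ∈ t, N x).ncard) :
    ∃ f : α → α, InjOn f s ∧ ∀ x ∈ s, f x ∈ N x := by
  classical
  obtain ⟨g, hg, hgN⟩ := (Finset.all_card_le_biUnion_card_iff_exists_injective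
    fun x : s ↦ (hN x x.2).toFinset).1 fun u ↦ by
      have hunion : (⋃ x ∈ Subtype.val '' (u : Set s), N x) =
          ↑(u.biUnion fun x : s ↦ (hN x x.2).toFinset) := by
        ext y; simp
      have := hall _ (Subtype.coe_image_subset s u)
      rwa [hunion, ncard_coe_finset, Subtype.val_injective.injOn.ncard_image,
        ncard_coe_finset] at this
  refine ⟨fun a ↦ if h : a ∈ s then g ⟨a, h⟩ else a, fun a ha b hb hab ↦ ?_, fun a ha ↦ ?_⟩
  · exact congrArg Subtype.val (hg (by simpa [ha, hb] using hab) : (⟨a, ha⟩ : s) = ⟨b, hb⟩)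
  · simpa [ha] using hgN ⟨a, ha⟩

theorem InjOn.bijOn_of_mapsTo_of_ncard_le {f : α → β} {s : Set α} {t : Set β}
    (hinj : InjOn f s) (hf : MapsTo f s t) (ht : t.Finite) (hcard : t.ncard ≤ s.ncard) :
    BijOn f s t := by
  refine ⟨hf, hinj, ?_⟩
  refine (eq_of_subset_of_ncard_le (image_subset_iff.2 hf) ?_ ht).ge
  rwa [hinj.ncard_image]

end Set

namespace Matroid

variable {α : Type*} {M : Matroid α} {A B I J S : Set α} {e : α}

theorem Indep.encard_inter_closure_le (hJ : M.Indep J) (X : Set α) :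
    (J ∩ M.closure X).encard ≤ X.encard :=
  calc (J ∩ M.closure X).encard
      ≤ M.eRk (M.closure X) :=
        (hJ.subset inter_subset_left).encard_le_eRk_of_subset inter_subset_right
    _ = M.eRk X := M.eRk_closure_eq X
    _ ≤ X.encard := M.eRk_le_encard X

theorem Indep.exists_notMem_closure_sdiff_singleton (hI : M.Indep I)
    (hSne : S.Nonempty) (he : e ∉ M.closure (I \ S)) : ∃ x ∈ S, e ∉ M.closure (I \ {x}) := by
  by_contra! h
  have hinter : M.closure (⋂ x ∈ S, I \ {x}) = ⋂ x ∈ S, M.closure (I \ {x}) :=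
    closure_biInter_eq_biInter_closure_of_biUnion_indep hSne
      (hI.subset (iUnion₂_subset fun _ _ ↦ sdiff_subset))
  have hsdiff : (⋂ x ∈ S, I \ {x}) = I \ S := by
    ext y; simp only [mem_iInter₂, mem_sdiff, mem_singleton_iff]
    exact ⟨fun hy ↦ ⟨(hy _ hSne.some_mem).1, fun hyS ↦ (hy y hyS).2 rfl⟩,
      fun hy x hx ↦ ⟨hy.1, fun hyx ↦ hy.2 (hyx ▸ hx)⟩⟩
  exact he (hsdiff ▸ hinter ▸ mem_iInter₂.2 h)

theorem IsBase.exists_insert_sdiff_singleton_isBase (hB : M.IsBase B) (hS : S ⊆ B)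
    (he : e ∈ M.E) (heS : e ∉ M.closure (B \ S)) : ∃ x ∈ S, M.IsBase (insert e (B \ {x})) := by
  have hSne : S.Nonempty := by
    rw [nonempty_iff_ne_empty]
    rintro rfl
    exact heS (by rwa [sdiff_empty, hB.closure_eq])
  obtain ⟨x, hxS, hx⟩ := hB.indep.exists_notMem_closure_sdiff_singleton hSne heS
  exact ⟨x, hxS, hB.exchange_base_of_notMem_closure (hS hxS) hx⟩

theorem IsBase.ncard_le_ncard_sdiff_closure [M.RankFinite] (hA : M.IsBase A) (hB : M.IsBase B)
    (hS : S ⊆ A) : S.ncard ≤ (B \ M.closure (A \ S)).ncard := by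
  have hsplitB := ncard_inter_add_ncard_sdiff_eq_ncard B (M.closure (A \ S)) hB.finite
  have hsplitA := ncard_sdiff_add_ncard_of_subset hS hA.finite
  have hinter : (B ∩ M.closure (A \ S)).ncard ≤ (A \ S).ncard :=
    ENat.toNat_le_toNat (hB.indep.encard_inter_closure_le (A \ S))
      hA.finite.sdiff.encard_lt_top.ne
  have hcard := hA.ncard_eq_ncard_of_isBase hB
  omega

end Matroid

/-- Brualdi's lemma: for two bases `A`, `B` of a matroid on a finite ground set, there is a
bijection `π : A → B` with `(A ∖ {x}) ∪ {π x}` a base for every `x ∈ A`. -/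
theorem stmt_2 {α : Type*} (M : Matroid α) (hE : M.E.Finite)
    {A B : Set α} (hA : M.IsBase A) (hB : M.IsBase B) :
    ∃ π : α → α, Set.BijOn π A B ∧ ∀ x ∈ A, M.IsBase ((A \ {x}) ∪ {π x}) := by
  have : M.Finite := ⟨hE⟩
  set N : α → Set α := fun x ↦ {y ∈ B | M.IsBase (insert y (A \ {x}))}
  have hNB : ∀ x, N x ⊆ B := fun x ↦ sep_subset _ _
  have hall : ∀ S ⊆ A, S.ncard ≤ (⋃ x ∈ S, N x).ncard := by
    intro S hS
    have hsub : B \ M.closure (A \ S) ⊆ ⋃ x ∈ S, N x := by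
      rintro y ⟨hyB, hy⟩
      obtain ⟨x, hxS, hx⟩ := hA.exists_insert_sdiff_singleton_isBase hS (hB.subset_ground hyB) hy
      exact mem_biUnion hxS ⟨hyB, hx⟩
    exact (hA.ncard_le_ncard_sdiff_closure hB hS).trans
      (ncard_le_ncard hsub (hB.finite.subset (iUnion₂_subset fun x _ ↦ hNB x)))
  obtain ⟨π, hinj, hπN⟩ :=
    exists_injOn_mem_of_ncard_le_ncard_biUnion N (fun x _ ↦ hB.finite.subset (hNB x)) hall
  refine ⟨π, hinj.bijOn_of_mapsTo_of_ncard_le (fun x hx ↦ hNB x (hπN x hx)) hB.finite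
    (hB.ncard_eq_ncard_of_isBase hA).le, fun x hx ↦ ?_⟩
  rw [union_singleton]
  exact (hπN x hx).2
end

section
/- Let M be a matroid on finite ground set X and let A = {a_1,…,a_r} and B = {b_1,…,b_r} be two bases of M (a_1,…,a_r distinct and b_1,…,b_r distinct), indexed so that (A∖{a_i})∪{b_i} is a base of M for each 1 ≤ i ≤ r. Let g : 2^X → ℝ be a set function, let ℓ(C) = ∑_{j∈C} w_j be a linear set function given by weights w : X → ℝ, and suppose h : 2^X → ℝ satisfies (e/(e−1))·g(A) ≥ g(B) + ∑_{i=1}^r [h(A) − h((A∖{a_i})∪{b_i})]. Define ψ(C) = (1−1/e)·h(C) + ℓ(C). Then g(A) + ℓ(A) ≥ (1−1/e)·g(B) + ℓ(B) + ∑_{i=1}^r [ψ(A) − ψ((A∖{a_i})∪{b_i})]. -/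
/-!
Since each swap is again a base, `b_i ∉ A ∖ {a_i}`, so swapping changes the linear part by exactly
`w(b_i) - w(a_i)`. Hence the swap terms of `ψ` split into `(1 - 1/e)` times those of `h` plus
`∑ (w(a_i) - w(b_i)) = ℓ(A) - ℓ(B)`. Multiplying the
Filmus–Ward inequality by `1 - 1/e = (e/(e-1))⁻¹` bounds the `h`-part, and the `ℓ`-part cancels.
-/

open Finset

theorem Matroid.IsBase.notMem_of_isBase_insert_diff {α : Type*} {M : Matroid α} {B : Set α}
    {x y : α} (hB : M.IsBase B) (hswap : M.IsBase (insert y (B \ {x}))) (hx : x ∈ B) :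
    y ∉ B \ {x} := by
  intro hy
  rw [Set.insert_eq_of_mem hy] at hswap
  have hx' : x ∈ B \ {x} := by rwa [hswap.eq_of_subset_isBase hB Set.sdiff_subset]
  exact hx'.2 rfl

theorem sum_insert_erase_eq {α : Type*} [DecidableEq α] {A : Finset α} {x y : α}
    (hx : x ∈ A) (hy : y ∉ A.erase x) (w : α → ℝ) :
    ∑ j ∈ insert y (A.erase x), w j = ∑ j ∈ A, w j - w x + w y := by
  rw [sum_insert hy, sum_erase_eq_sub hx]
  ring

theorem sum_sub_sum_insert_erase_eq {ι α : Type*} [Fintype ι] [DecidableEq α]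
    {a b : ι → α} (ha : Function.Injective a) (hb : Function.Injective b)
    (hfresh : ∀ i, b i ∉ (univ.image a).erase (a i)) (w : α → ℝ) :
    ∑ i, (∑ j ∈ univ.image a, w j - ∑ j ∈ insert (b i) ((univ.image a).erase (a i)), w j) =
      ∑ j ∈ univ.image a, w j - ∑ j ∈ univ.image b, w j := by
  have hmem : ∀ i, a i ∈ univ.image a := fun i => mem_image_of_mem a (mem_univ i)
  simp only [sum_insert_erase_eq (hmem _) (hfresh _), sum_image ha.injOn, sum_image hb.injOn]
  rw [← sum_sub_distrib]
  exact sum_congr rfl fun i _ => by ring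

theorem exp_one_div_exp_one_sub_one :
    Real.exp 1 / (Real.exp 1 - 1) = (1 - 1 / Real.exp 1)⁻¹ := by
  have he : Real.exp 1 ≠ 0 := (Real.exp_pos 1).ne'
  field_simp

theorem one_sub_inv_exp_one_pos : 0 < 1 - 1 / Real.exp 1 := by
  rw [sub_pos, div_lt_one (Real.exp_pos 1)]
  exact Real.one_lt_exp_iff.mpr one_pos

theorem stmt_3_general {α : Type*} [DecidableEq α] (M : Matroid α) (r : ℕ)
    (a b : Fin r → α) (ha : Function.Injective a) (hb : Function.Injective b)
    (A B : Finset α)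
    (hAdef : A = Finset.image a Finset.univ) (hBdef : B = Finset.image b Finset.univ)
    (hAbase : M.IsBase (A : Set α))
    (hswap : ∀ i : Fin r, M.IsBase ((insert (b i) (A.erase (a i)) : Finset α) : Set α))
    (g h : Finset α → ℝ) (w : α → ℝ) (ℓ : Finset α → ℝ)
    (hlin : ∀ C : Finset α, ℓ C = ∑ j ∈ C, w j)
    (hFW : Real.exp 1 / (Real.exp 1 - 1) * g A ≥
      g B + ∑ i : Fin r, (h A - h (insert (b i) (A.erase (a i)))))
    (ψ : Finset α → ℝ)
    (hψ : ∀ C : Finset α, ψ C = (1 - 1 / Real.exp 1) * h C + ℓ C) :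
    g A + ℓ A ≥ (1 - 1 / Real.exp 1) * g B + ℓ B +
      ∑ i : Fin r, (ψ A - ψ (insert (b i) (A.erase (a i)))) := by
  have hfresh : ∀ i, b i ∉ A.erase (a i) := fun i => by
    have hai : a i ∈ A := hAdef ▸ mem_image_of_mem a (mem_univ i)
    have := hAbase.notMem_of_isBase_insert_diff (by simpa using hswap i) hai
    rwa [← coe_erase, mem_coe] at this
  have hℓ : ∑ i, (ℓ A - ℓ (insert (b i) (A.erase (a i)))) = ℓ A - ℓ B := by
    simp only [hlin]
    subst hAdef hBdef
    exact sum_sub_sum_insert_erase_eq ha hb hfresh w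
  have hψsum : ∑ i, (ψ A - ψ (insert (b i) (A.erase (a i)))) =
      (1 - 1 / Real.exp 1) * ∑ i, (h A - h (insert (b i) (A.erase (a i)))) +
        ∑ i, (ℓ A - ℓ (insert (b i) (A.erase (a i)))) := by
    rw [mul_sum, ← sum_add_distrib]
    exact sum_congr rfl fun i _ => by rw [hψ, hψ]; ring
  have hg : (1 - 1 / Real.exp 1) * (g B + ∑ i, (h A - h (insert (b i) (A.erase (a i))))) ≤
      g A := by
    rw [exp_one_div_exp_one_sub_one] at hFW
    exact (le_inv_mul_iff₀ one_sub_inv_exp_one_pos).mp hFW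
  rw [hψsum, hℓ]
  linarith

/-- Lemma 5.2 (non-oblivious local search locality gap): given bases `A = {a_1,…,a_r}` and
`B = {b_1,…,b_r}` of a matroid indexed so that every swap `(A∖{a_i})∪{b_i}` is a base, a set
function `g`, a linear function `ℓ` given by weights `w`, and an auxiliary potential `h`
satisfying the Filmus–Ward inequality, the potential `ψ(C) = (1-1/e)·h(C) + ℓ(C)` satisfies
`g(A) + ℓ(A) ≥ (1-1/e)·g(B) + ℓ(B) + ∑_i [ψ(A) - ψ((A∖{a_i})∪{b_i})]`. -/
theorem stmt_3 {α : Type*} [Fintype α] [DecidableEq α] (M : Matroid α) (r : ℕ)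
    (a b : Fin r → α) (ha : Function.Injective a) (hb : Function.Injective b)
    (A B : Finset α)
    (hAdef : A = Finset.image a Finset.univ) (hBdef : B = Finset.image b Finset.univ)
    (hAbase : M.IsBase (A : Set α)) (hBbase : M.IsBase (B : Set α))
    (hswap : ∀ i : Fin r, M.IsBase ((insert (b i) (A.erase (a i)) : Finset α) : Set α))
    (g h : Finset α → ℝ) (w : α → ℝ) (ℓ : Finset α → ℝ)
    (hlin : ∀ C : Finset α, ℓ C = ∑ j ∈ C, w j)
    (hFW : Real.exp 1 / (Real.exp 1 - 1) * g A ≥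
      g B + ∑ i : Fin r, (h A - h (insert (b i) (A.erase (a i)))))
    (ψ : Finset α → ℝ)
    (hψ : ∀ C : Finset α, ψ C = (1 - 1 / Real.exp 1) * h C + ℓ C) :
    g A + ℓ A ≥ (1 - 1 / Real.exp 1) * g B + ℓ B +
      ∑ i : Fin r, (ψ A - ψ (insert (b i) (A.erase (a i)))) :=
  stmt_3_general M r a b ha hb A B hAdef hBdef hAbase hswap g h w ℓ hlin hFW ψ hψ
end

section
/- Let f : 2^X → ℝ be a nonnegative, monotone decreasing, supermodular function on a finite ground set X with total curvature at most c ∈ [0,1). Define the linear function ℓ(A) = ∑_{j∈A} f_∅(j) and g(A) = −ℓ(A) − f(X∖A). If sets S, O ⊆ X satisfy g(S) + ℓ(S) ≥ (1 − 1/e)·g(X∖O) + ℓ(X∖O), then f(X∖S) ≤ (1 + (c/(1−c))·e^{−1})·f(O). -/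
/-- Reduction for supermodular minimization (Theorem 6.2): if `f` is nonnegative, monotone
decreasing, supermodular with total curvature at most `c ∈ [0,1)`, `ℓ(A) = ∑_{j∈A} f_∅(j)`,
`g(A) = -ℓ(A) - f(X∖A)`, and `S`, `O` satisfy
`g(S) + ℓ(S) ≥ (1-1/e)·g(X∖O) + ℓ(X∖O)`, then
`f(X∖S) ≤ (1 + (c/(1-c))·e⁻¹)·f(O)`. -/
theorem stmt_5 {α : Type*} [Fintype α] [DecidableEq α]
    (f : Finset α → ℝ) (c : ℝ) (hc0 : 0 ≤ c) (hc1 : c < 1)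
    (hnonneg : ∀ A : Finset α, 0 ≤ f A)
    (hmono : ∀ A B : Finset α, A ⊆ B → f B ≤ f A)
    (hsupmod : ∀ A B : Finset α, A ⊆ B → ∀ j, j ∉ B →
      f (insert j A) - f A ≤ f (insert j B) - f B)
    (hcurv : ∀ j : α,
      f Finset.univ - f (Finset.univ.erase j) ≤ (1 - c) * (f {j} - f ∅))
    (ℓ g : Finset α → ℝ)
    (hℓ : ∀ A : Finset α, ℓ A = ∑ j ∈ A, (f {j} - f ∅))
    (hg : ∀ A : Finset α, g A = -ℓ A - f (Finset.univ \ A))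
    (S O : Finset α)
    (hSO : g S + ℓ S ≥ (1 - 1 / Real.exp 1) * g (Finset.univ \ O) + ℓ (Finset.univ \ O)) :
    f (Finset.univ \ S) ≤ (1 + (c / (1 - c)) * (Real.exp 1)⁻¹) * f O := by
  set e := Real.exp 1 with he
  have hepos : 0 < e := Real.exp_pos 1
  have hcpos : 0 < 1 - c := by linarith
  -- key supermodularity lemma
  have hkey : ∀ T : Finset α,
      ∑ j ∈ T, (f (Finset.univ.erase j) - f Finset.univ)
        ≤ f (Finset.univ \ T) - f Finset.univ := by
    intro T
    induction T using Finset.induction with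
    | empty => simp
    | @insert j T hj ih =>
      rw [Finset.sum_insert hj]
      have hjmem : j ∈ Finset.univ \ T := by simp [hj]
      have hsub : (Finset.univ \ T).erase j ⊆ Finset.univ.erase j :=
        Finset.erase_subset_erase j Finset.sdiff_subset
      have h1 := hsupmod _ _ hsub j (Finset.notMem_erase j _)
      rw [Finset.insert_erase hjmem, Finset.insert_erase (Finset.mem_univ j)] at h1
      have h2 : Finset.univ \ insert j T = (Finset.univ \ T).erase j := by
        ext x; simp [Finset.mem_sdiff, Finset.mem_erase]
      rw [h2]
      linarith
  have h4 : Finset.univ \ (Finset.univ \ O) = O := by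
    simp [Finset.sdiff_sdiff_self_left]
  -- curvature bound
  have hO : (1 - c) * (-ℓ (Finset.univ \ O)) ≤ f O := by
    have hneg : -ℓ (Finset.univ \ O) = ∑ j ∈ Finset.univ \ O, (f ∅ - f {j}) := by
      rw [hℓ, ← Finset.sum_neg_distrib]
      exact Finset.sum_congr rfl (fun j _ => by ring)
    have hsum : ∑ j ∈ Finset.univ \ O, ((1 - c) * (f ∅ - f {j}))
        ≤ ∑ j ∈ Finset.univ \ O, (f (Finset.univ.erase j) - f Finset.univ) := by
      apply Finset.sum_le_sum
      intro j _
      have := hcurv j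
      nlinarith
    have h3 := hkey (Finset.univ \ O)
    rw [h4] at h3
    have h5 := hnonneg Finset.univ
    rw [hneg, Finset.mul_sum]
    linarith
  -- rewrite hSO
  rw [hg S, hg (Finset.univ \ O), h4] at hSO
  set a := f (Finset.univ \ S)
  set b := f O
  set L := ℓ (Finset.univ \ O)
  have h1 : a ≤ (1 - 1 / e) * b + (1 / e) * (-L) := by linarith
  have hb : 0 ≤ b := hnonneg O
  have heq : 1 + (c / (1 - c)) * e⁻¹ = ((1 - c) * e + c) / ((1 - c) * e) := by
    field_simp
  rw [heq, div_mul_eq_mul_div, le_div_iff₀ (by positivity)]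
  have h1' : a * ((1 - c) * e) ≤ ((1 - c) * e - (1 - c)) * b + (1 - c) * (-L) := by
    have h2 := mul_le_mul_of_nonneg_right h1 (le_of_lt (mul_pos hcpos hepos))
    have hre : ((1 - 1 / e) * b + 1 / e * (-L)) * ((1 - c) * e)
        = ((1 - c) * e - (1 - c)) * b + (1 - c) * (-L) := by
      field_simp
    linarith
  linarith
end

section
/- Let f : 2^X → ℝ be a nonnegative, monotone increasing function on a finite ground set X with generalized curvature at most c ∈ [0,1]. Let s_1,…,s_r be distinct elements and o_1,…,o_r be distinct elements of X, and set S_i = {s_1,…,s_i} and O_i = {o_1,…,o_i} (with S_0 = O_0 = ∅). Suppose that for every 1 ≤ i ≤ r, o_i ∉ S_{i−1} and f_{S_{i−1}}(s_i) ≥ f_{S_{i−1}}(o_i) (the greedy maximization property, which holds when s_i is the greedy choice and S_{i−1} ∪ {o_i} is independent in the underlying matroid). Then f(S_r) ≥ (1−c)·f(O_r). -/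
/-- Theorem 7.4: greedy maximization of a nonnegative monotone increasing function of
generalized curvature at most `c ∈ [0,1]` gives `f(S) ≥ (1-c)·f(O)`. -/
theorem stmt_6 {α : Type*} [Fintype α] [DecidableEq α]
    (f : Finset α → ℝ) (c : ℝ) (hc0 : 0 ≤ c) (hc1 : c ≤ 1)
    (hnonneg : ∀ A : Finset α, 0 ≤ f A)
    (hmono : ∀ A B : Finset α, A ⊆ B → f A ≤ f B)
    (hcurv : ∀ (j : α) (A B : Finset α), j ∉ A → j ∉ B →
      (1 - c) * (f (insert j B) - f B) ≤ f (insert j A) - f A)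
    (r : ℕ) (s o : ℕ → α)
    (hs : Set.InjOn s (Set.Iio r)) (ho : Set.InjOn o (Set.Iio r))
    (S O : ℕ → Finset α)
    (hS : ∀ i, S i = (Finset.range i).image s)
    (hO : ∀ i, O i = (Finset.range i).image o)
    (hgreedy : ∀ i < r, o i ∉ S i ∧
      f (insert (o i) (S i)) - f (S i) ≤ f (insert (s i) (S i)) - f (S i)) :
    (1 - c) * f (O r) ≤ f (S r) := by
  have hc : (0:ℝ) ≤ 1 - c := by linarith
  have key : ∀ k, k ≤ r → (1 - c) * (f (O k) - f ∅) ≤ f (S k) - f ∅ := by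
    intro k hk
    induction k with
    | zero =>
      simp [hS, hO]
    | succ k ih =>
      have hkr : k < r := hk
      have ih' := ih (le_of_lt hkr)
      -- set identities
      have hSrec : S (k + 1) = insert (s k) (S k) := by
        rw [hS, hS, Finset.range_add_one, Finset.image_insert]
      have hOrec : O (k + 1) = insert (o k) (O k) := by
        rw [hO, hO, Finset.range_add_one, Finset.image_insert]
      have hoO : o k ∉ O k := by
        rw [hO]
        simp only [Finset.mem_image, Finset.mem_range, not_exists]
        rintro j ⟨hj, hje⟩
        have := ho (show j ∈ Set.Iio r by exact lt_trans hj hkr)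
          (show k ∈ Set.Iio r from hkr) hje
        omega
      obtain ⟨hoS, hgr⟩ := hgreedy k hkr
      have hcur := hcurv (o k) (S k) (O k) hoS hoO
      have hstep : (1 - c) * (f (O (k+1)) - f (O k)) ≤ f (S (k+1)) - f (S k) := by
        rw [hSrec, hOrec]
        calc (1 - c) * (f (insert (o k) (O k)) - f (O k))
            ≤ f (insert (o k) (S k)) - f (S k) := hcur
          _ ≤ f (insert (s k) (S k)) - f (S k) := hgr
      nlinarith [hstep, ih']
  have h := key r le_rfl
  have h0 := hnonneg (∅ : Finset α)
  nlinarith [h, h0, hnonneg (O r)]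
end

section
/- Let f : 2^X → ℝ be a nonnegative, monotone increasing function on a finite ground set X with generalized curvature at most c ∈ [0,1). Let s_1,…,s_r be distinct elements and o_1,…,o_r be distinct elements of X, and set S_i = {s_1,…,s_i} and O_i = {o_1,…,o_i} (with S_0 = O_0 = ∅). Suppose that for every 1 ≤ i ≤ r, o_i ∉ S_{i−1} and f_{S_{i−1}}(s_i) ≤ f_{S_{i−1}}(o_i) (the greedy minimization property, which holds when s_i is the greedy minimizing choice and S_{i−1} ∪ {o_i} is independent in the underlying matroid). Then f(S_r) ≤ (1/(1−c))·f(O_r). -/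
/-- Theorem 7.5: greedy minimization of a nonnegative monotone increasing function of
generalized curvature at most `c ∈ [0,1)` gives `f(S) ≤ (1/(1-c))·f(O)`. -/
theorem stmt_7 {α : Type*} [Fintype α] [DecidableEq α]
    (f : Finset α → ℝ) (c : ℝ) (hc0 : 0 ≤ c) (hc1 : c < 1)
    (hnonneg : ∀ A : Finset α, 0 ≤ f A)
    (hmono : ∀ A B : Finset α, A ⊆ B → f A ≤ f B)
    (hcurv : ∀ (j : α) (A B : Finset α), j ∉ A → j ∉ B →
      (1 - c) * (f (insert j B) - f B) ≤ f (insert j A) - f A)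
    (r : ℕ) (s o : ℕ → α)
    (hs : Set.InjOn s (Set.Iio r)) (ho : Set.InjOn o (Set.Iio r))
    (S O : ℕ → Finset α)
    (hS : ∀ i, S i = (Finset.range i).image s)
    (hO : ∀ i, O i = (Finset.range i).image o)
    (hgreedy : ∀ i < r, o i ∉ S i ∧
      f (insert (s i) (S i)) - f (S i) ≤ f (insert (o i) (S i)) - f (S i)) :
    f (S r) ≤ (1 / (1 - c)) * f (O r) := by
  have hc' : (0:ℝ) < 1 - c := by linarith
  have hSsucc : ∀ n, S (n + 1) = insert (s n) (S n) := by
    intro n; rw [hS, hS, Finset.range_add_one, Finset.image_insert]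
  have hOsucc : ∀ n, O (n + 1) = insert (o n) (O n) := by
    intro n; rw [hO, hO, Finset.range_add_one, Finset.image_insert]
  have key : ∀ n, n ≤ r → (1 - c) * (f (S n) - f ∅) ≤ f (O n) - f ∅ := by
    intro n
    induction n with
    | zero =>
      intro _
      rw [hS, hO]
      simp
    | succ n ih =>
      intro hn
      have hnr : n < r := hn
      have ihn := ih (le_of_lt hnr)
      obtain ⟨hoS, hg⟩ := hgreedy n hnr
      have hoO : o n ∉ O n := by
        rw [hO]
        simp only [Finset.mem_image, Finset.mem_range]
        rintro ⟨k, hk, hko⟩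
        have := ho (show k ∈ Set.Iio r from lt_trans hk hnr) (show n ∈ Set.Iio r from hnr) hko
        omega
      have h1 := hcurv (o n) (O n) (S n) hoO hoS
      rw [← hOsucc] at h1
      have h2 : (1 - c) * (f (S (n + 1)) - f (S n)) ≤
          (1 - c) * (f (insert (o n) (S n)) - f (S n)) := by
        rw [hSsucc]
        exact mul_le_mul_of_nonneg_left hg (le_of_lt hc')
      linarith
  have hkey := key r le_rfl
  have h0 : 0 ≤ f ∅ := hnonneg ∅
  rw [one_div, inv_mul_eq_div, le_div_iff₀ hc']
  nlinarith
end

section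
/- Let f : 2^X → ℝ be a nonnegative, monotone decreasing function on a finite ground set X with generalized curvature at most c ∈ [0,1), and define f*(S) = f(X∖S). Let s_1,…,s_r be distinct elements and o_1,…,o_r be distinct elements of X, and set S_i = {s_1,…,s_i} and O_i = {o_1,…,o_i} (with S_0 = O_0 = ∅). Suppose that for every 1 ≤ i ≤ r, o_i ∉ S_{i−1} and f*_{S_{i−1}}(s_i) ≤ f*_{S_{i−1}}(o_i) (greedy minimization on f* in the dual matroid). Then f(X∖S_r) ≤ (1/(1−c))·f(X∖O_r). -/
private lemma ins_sdiff {α : Type*} [Fintype α] [DecidableEq α] (j : α) (T : Finset α)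
    (hj : j ∉ T) : insert j (Finset.univ \ insert j T) = Finset.univ \ T := by
  ext a
  simp only [Finset.mem_insert, Finset.mem_sdiff, Finset.mem_univ, true_and]
  constructor
  · rintro (rfl | ⟨h⟩)
    · exact hj
    · exact fun ha => h (Or.inr ha)
  · intro ha
    by_cases h : a = j
    · exact Or.inl h
    · exact Or.inr (by push_neg; exact ⟨h, ha⟩)

/-- Corollary 7.8: greedy minimization of `f*(S) = f(X∖S)` in the dual matroid, for a
nonnegative monotone decreasing `f` of generalized curvature at most `c ∈ [0,1)`, gives
`f(X∖S) ≤ (1/(1-c))·f(X∖O)`. -/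
theorem stmt_9 {α : Type*} [Fintype α] [DecidableEq α]
    (f : Finset α → ℝ) (c : ℝ) (hc0 : 0 ≤ c) (hc1 : c < 1)
    (hnonneg : ∀ A : Finset α, 0 ≤ f A)
    (hmono : ∀ A B : Finset α, A ⊆ B → f B ≤ f A)
    (hcurv : ∀ (j : α) (A B : Finset α), j ∉ A → j ∉ B →
      f (insert j A) - f A ≤ (1 - c) * (f (insert j B) - f B))
    (fstar : Finset α → ℝ)
    (hfstar : ∀ S : Finset α, fstar S = f (Finset.univ \ S))
    (r : ℕ) (s o : ℕ → α)
    (hs : Set.InjOn s (Set.Iio r)) (ho : Set.InjOn o (Set.Iio r))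
    (S O : ℕ → Finset α)
    (hS : ∀ i, S i = (Finset.range i).image s)
    (hO : ∀ i, O i = (Finset.range i).image o)
    (hgreedy : ∀ i < r, o i ∉ S i ∧
      fstar (insert (s i) (S i)) - fstar (S i) ≤ fstar (insert (o i) (S i)) - fstar (S i)) :
    f (Finset.univ \ S r) ≤ (1 / (1 - c)) * f (Finset.univ \ O r) := by
  have h1c : (0:ℝ) < 1 - c := by linarith
  have key : ∀ n ≤ r, f (Finset.univ \ S n) - f Finset.univ ≤
      (1 / (1 - c)) * (f (Finset.univ \ O n) - f Finset.univ) := by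
    intro n hn
    induction n with
    | zero => simp [hS, hO]
    | succ n ih =>
      have hnr : n < r := hn
      have ih' := ih (le_of_lt hnr)
      have hSsucc : S (n + 1) = insert (s n) (S n) := by
        rw [hS, hS, Finset.range_add_one, Finset.image_insert]
      have hOsucc : O (n + 1) = insert (o n) (O n) := by
        rw [hO, hO, Finset.range_add_one, Finset.image_insert]
      have hoS : o n ∉ S n := (hgreedy n hnr).1
      have hoO : o n ∉ O n := by
        intro hmem
        rw [hO] at hmem
        obtain ⟨j, hj, h⟩ := Finset.mem_image.1 hmem
        rw [Finset.mem_range] at hj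
        have : j = n := ho (Set.mem_Iio.2 (lt_trans hj hnr)) (Set.mem_Iio.2 hnr) h
        omega
      -- greedy inequality in terms of f
      have hg := (hgreedy n hnr).2
      rw [hfstar, hfstar, hfstar] at hg
      -- curvature step
      have hcv := hcurv (o n) (Finset.univ \ insert (o n) (O n))
        (Finset.univ \ insert (o n) (S n))
        (by simp) (by simp)
      rw [ins_sdiff _ _ hoO, ins_sdiff _ _ hoS] at hcv
      -- S-step bound
      have hstep : f (Finset.univ \ S (n+1)) - f (Finset.univ \ S n) ≤
          (1 / (1 - c)) * (f (Finset.univ \ O (n+1)) - f (Finset.univ \ O n)) := by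
        rw [hSsucc, hOsucc]
        rw [div_mul_eq_mul_div, le_div_iff₀ h1c]
        nlinarith [hg, hcv]
      have := add_le_add hstep ih'
      rw [hOsucc] at hstep
      calc f (Finset.univ \ S (n+1)) - f Finset.univ
          = (f (Finset.univ \ S (n+1)) - f (Finset.univ \ S n)) +
            (f (Finset.univ \ S n) - f Finset.univ) := by ring
        _ ≤ (1 / (1 - c)) * (f (Finset.univ \ O (n+1)) - f (Finset.univ \ O n)) +
            (1 / (1 - c)) * (f (Finset.univ \ O n) - f Finset.univ) := by
              rw [← hOsucc] at hstep; exact add_le_add hstep ih'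
        _ = (1 / (1 - c)) * (f (Finset.univ \ O (n+1)) - f Finset.univ) := by ring
  have hk := key r le_rfl
  have hfu : 0 ≤ f Finset.univ := hnonneg _
  have h1 : (1:ℝ) ≤ 1 / (1 - c) := by
    rw [le_div_iff₀ h1c]; linarith
  nlinarith [hk, hfu, h1]
end

section
/- Let c_1,…,c_n be linearly independent vectors in ℝ^m. For S ⊆ {1,…,n}, let proj_S denote the orthogonal projection onto span{c_i : i ∈ S}, and define F(S) = ∑_{j=1}^n ‖c_j − proj_S(c_j)‖². Then for every S ⊆ {1,…,n} and every i ∉ S, min_{‖x‖=1} ‖∑_{j=1}^n x_j c_j‖² ≤ F(S) − F(S ∪ {i}) ≤ max_{‖x‖=1} ‖∑_{j=1}^n x_j c_j‖², where the min and max are over unit vectors x ∈ ℝ^n. -/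
/-!
Let `K = span {c_j : j ∈ S}` and let `u` be the unit vector along the residual `c_i - P_K c_i`.
Then `span {c_j : j ∈ S ∪ {i}} = K ⊕ ℝu` orthogonally, so each squared residual `‖c_j - P c_j‖²`
drops by exactly `⟪u, c_j⟫²`, and `F(S) - F(S ∪ {i}) = ‖Aᵀu‖²`. Write `λ_min`, `λ_max` for the
infimum and supremum of `‖Ax‖²` over unit vectors `x`. As `u` lies in the range of `A`, say
`u = Av`, Cauchy–Schwarz gives `1 = ⟪v, Aᵀu⟫ ≤ ‖v‖ ‖Aᵀu‖` while `‖Av‖² ≥ λ_min ‖v‖²`, whence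
`λ_min ≤ ‖Aᵀu‖²`. Dually `‖Aᵀu‖² = ⟪AAᵀu, u⟫ ≤ ‖A(Aᵀu)‖ ≤ √λ_max ‖Aᵀu‖`, whence `‖Aᵀu‖² ≤ λ_max`.
-/

open scoped InnerProductSpace

namespace Submodule

theorem sup_span_singleton_sub {R M : Type*} [Ring R] [AddCommGroup M] [Module R M]
    {K : Submodule R M} {y : M} (hy : y ∈ K) (x : M) :
    K ⊔ R ∙ (x - y) = K ⊔ R ∙ x := by
  apply le_antisymm <;> refine sup_le le_sup_left ((span_singleton_le_iff_mem _ _).2 ?_)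
  · exact sub_mem (mem_sup_right (mem_span_singleton_self x)) (mem_sup_left hy)
  · simpa using add_mem (mem_sup_right (mem_span_singleton_self (x - y))) (mem_sup_left hy)

variable {𝕜 E : Type*} [RCLike 𝕜] [NormedAddCommGroup E] [InnerProductSpace 𝕜 E]

theorem starProjection_sup_span_singleton_of_mem_orthogonal {K : Submodule 𝕜 E}
    [K.HasOrthogonalProjection] {u : E} (hu : u ∈ Kᗮ) (hu1 : ‖u‖ = 1)
    [(K ⊔ 𝕜 ∙ u).HasOrthogonalProjection] (x : E) :
    (K ⊔ 𝕜 ∙ u).starProjection x = K.starProjection x + ⟪u, x⟫_𝕜 • u := by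
  have huu : ⟪u, u⟫_𝕜 = (1 : 𝕜) := by simp [inner_self_eq_norm_sq_to_K, hu1]
  refine eq_starProjection_of_mem_of_inner_eq_zero
    (add_mem (mem_sup_left (K.starProjection_apply_mem x))
      (mem_sup_right (smul_mem _ _ (mem_span_singleton_self u)))) fun w hw ↦ ?_
  obtain ⟨k, hk, v, hv, rfl⟩ := mem_sup.1 hw
  obtain ⟨a, rfl⟩ := mem_span_singleton.1 hv
  have hxk : ⟪x - K.starProjection x, k⟫_𝕜 = 0 := K.starProjection_inner_eq_zero x k hk
  have huk : ⟪u, k⟫_𝕜 = 0 := inner_left_of_mem_orthogonal hk hu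
  have hpu : ⟪K.starProjection x, u⟫_𝕜 = 0 :=
    inner_right_of_mem_orthogonal (K.starProjection_apply_mem x) hu
  simp only [sub_add_eq_sub_sub, inner_sub_left, inner_add_right, inner_smul_right,
    inner_smul_left, inner_conj_symm, hpu, huk, huu] at hxk ⊢
  linear_combination hxk

theorem norm_sub_starProjection_sup_span_singleton_sq {K : Submodule 𝕜 E}
    [K.HasOrthogonalProjection] {u : E} (hu : u ∈ Kᗮ) (hu1 : ‖u‖ = 1)
    [(K ⊔ 𝕜 ∙ u).HasOrthogonalProjection] (x : E) :
    ‖x - (K ⊔ 𝕜 ∙ u).starProjection x‖ ^ 2 = ‖x - K.starProjection x‖ ^ 2 - ‖⟪u, x⟫_𝕜‖ ^ 2 := by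
  have hdecomp : x - K.starProjection x = (x - (K ⊔ 𝕜 ∙ u).starProjection x) + ⟪u, x⟫_𝕜 • u := by
    rw [starProjection_sup_span_singleton_of_mem_orthogonal hu hu1]
    abel
  have horth : ⟪x - (K ⊔ 𝕜 ∙ u).starProjection x, ⟪u, x⟫_𝕜 • u⟫_𝕜 = 0 :=
    starProjection_inner_eq_zero x _ (mem_sup_right (smul_mem _ _ (mem_span_singleton_self u)))
  have hpyth := norm_add_sq_eq_norm_sq_add_norm_sq_of_inner_eq_zero _ _ horth
  rw [← hdecomp, norm_smul, hu1, mul_one] at hpyth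
  linear_combination -hpyth

end Submodule

section UnitSphere

variable {V W : Type*} [NormedAddCommGroup V] [NormedSpace ℝ V]
  [NormedAddCommGroup W] [NormedSpace ℝ W]

theorem norm_sq_apply_div_norm_sq_mem (T : V →ₗ[ℝ] W) {x : V} (hx : x ≠ 0) :
    ‖T x‖ ^ 2 / ‖x‖ ^ 2 ∈ {y : ℝ | ∃ x : V, ‖x‖ = 1 ∧ y = ‖T x‖ ^ 2} := by
  refine ⟨‖x‖⁻¹ • x, norm_smul_inv_norm hx, ?_⟩
  rw [map_smul, norm_smul, norm_inv, norm_norm, mul_pow, inv_pow, inv_mul_eq_div]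

theorem sInf_mul_norm_sq_le (T : V →ₗ[ℝ] W) (x : V) :
    sInf {y : ℝ | ∃ x : V, ‖x‖ = 1 ∧ y = ‖T x‖ ^ 2} * ‖x‖ ^ 2 ≤ ‖T x‖ ^ 2 := by
  rcases eq_or_ne x 0 with rfl | hx
  · simp
  have hbdd : BddBelow {y : ℝ | ∃ x : V, ‖x‖ = 1 ∧ y = ‖T x‖ ^ 2} :=
    ⟨0, by rintro _ ⟨x, -, rfl⟩; positivity⟩
  rw [← le_div_iff₀ (by positivity)]
  exact csInf_le hbdd (norm_sq_apply_div_norm_sq_mem T hx)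

theorem norm_sq_le_sSup_mul (T : V →L[ℝ] W) (x : V) :
    ‖T x‖ ^ 2 ≤ sSup {y : ℝ | ∃ x : V, ‖x‖ = 1 ∧ y = ‖T x‖ ^ 2} * ‖x‖ ^ 2 := by
  rcases eq_or_ne x 0 with rfl | hx
  · simp
  have hbdd : BddAbove {y : ℝ | ∃ x : V, ‖x‖ = 1 ∧ y = ‖T x‖ ^ 2} := by
    refine ⟨‖T‖ ^ 2, ?_⟩
    rintro _ ⟨x, hx1, rfl⟩
    simpa [hx1] using pow_le_pow_left₀ (norm_nonneg _) (T.le_opNorm x) 2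
  rw [← div_le_iff₀ (by positivity)]
  exact le_csSup hbdd (norm_sq_apply_div_norm_sq_mem T.toLinearMap hx)

end UnitSphere

section InnerMap

variable {V W : Type*} [NormedAddCommGroup V] [InnerProductSpace ℝ V]
  [NormedAddCommGroup W] [InnerProductSpace ℝ W]

theorem sInf_le_norm_sq_of_inner_apply_eq (T : V →ₗ[ℝ] W) {u : W} {v t : V} (hv : T v = u)
    (hu : ‖u‖ = 1) (ht : ∀ x, ⟪T x, u⟫_ℝ = ⟪x, t⟫_ℝ) :
    sInf {y : ℝ | ∃ x : V, ‖x‖ = 1 ∧ y = ‖T x‖ ^ 2} ≤ ‖t‖ ^ 2 := by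
  have hv0 : v ≠ 0 := by
    rintro rfl
    simp [← hv] at hu
  have hvt : 1 ≤ ‖v‖ * ‖t‖ := calc
    1 = ⟪T v, u⟫_ℝ := by rw [hv, real_inner_self_eq_norm_sq, hu, one_pow]
    _ = ⟪v, t⟫_ℝ := ht v
    _ ≤ ‖v‖ * ‖t‖ := real_inner_le_norm v t
  have hinf := sInf_mul_norm_sq_le T v
  rw [hv, hu, one_pow] at hinf
  refine le_of_mul_le_mul_right ?_ (pow_pos (norm_pos_iff.2 hv0) 2)
  nlinarith

theorem norm_sq_le_sSup_of_inner_apply_eq (T : V →L[ℝ] W) {u : W} {t : V} (hu : ‖u‖ ≤ 1)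
    (ht : ∀ x, ⟪T x, u⟫_ℝ = ⟪x, t⟫_ℝ) :
    ‖t‖ ^ 2 ≤ sSup {y : ℝ | ∃ x : V, ‖x‖ = 1 ∧ y = ‖T x‖ ^ 2} := by
  have hsup_nonneg : 0 ≤ sSup {y : ℝ | ∃ x : V, ‖x‖ = 1 ∧ y = ‖T x‖ ^ 2} :=
    Real.sSup_nonneg (by rintro _ ⟨x, -, rfl⟩; positivity)
  have htt : ‖t‖ ^ 2 ≤ ‖T t‖ := calc
    ‖t‖ ^ 2 = ⟪T t, u⟫_ℝ := by rw [ht, real_inner_self_eq_norm_sq]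
    _ ≤ ‖T t‖ * ‖u‖ := real_inner_le_norm _ _
    _ ≤ ‖T t‖ := mul_le_of_le_one_right (norm_nonneg _) hu
  have hsup := norm_sq_le_sSup_mul T t
  nlinarith [pow_le_pow_left₀ (by positivity) htt 2]

end InnerMap

open Submodule

/-- Bounds on marginal values of the column-subset selection objective (inequalities (10)):
for linearly independent columns `c_1,…,c_n`, every `S` and `i ∉ S`,
`min_{‖x‖=1} ‖Ax‖² ≤ F(S) - F(S∪{i}) ≤ max_{‖x‖=1} ‖Ax‖²`. -/
theorem stmt_10 {m n : ℕ} (c : Fin n → EuclideanSpace ℝ (Fin m))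
    (hli : LinearIndependent ℝ c)
    (F : Finset (Fin n) → ℝ)
    (hF : ∀ S : Finset (Fin n), F S = ∑ j : Fin n,
      ‖c j - (Submodule.orthogonalProjectionOnto (Submodule.span ℝ (c '' ↑S)) (c j) : EuclideanSpace ℝ (Fin m))‖ ^ 2)
    (S : Finset (Fin n)) (i : Fin n) (hi : i ∉ S) :
    sInf {y : ℝ | ∃ x : EuclideanSpace ℝ (Fin n), ‖x‖ = 1 ∧ y = ‖∑ j : Fin n, x j • c j‖ ^ 2}
        ≤ F S - F (insert i S) ∧
    F S - F (insert i S)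
        ≤ sSup {y : ℝ | ∃ x : EuclideanSpace ℝ (Fin n), ‖x‖ = 1 ∧ y = ‖∑ j : Fin n, x j • c j‖ ^ 2} := by
  set K := span ℝ (c '' ↑S)
  set w := c i - K.starProjection (c i)
  have hw : w ≠ 0 := sub_ne_zero.2 fun h ↦
    hli.notMem_span_image (s := ↑S) hi (h ▸ K.starProjection_apply_mem (c i))
  set u := ‖w‖⁻¹ • w
  have hu1 : ‖u‖ = 1 := norm_smul_inv_norm hw
  have huK : u ∈ Kᗮ := smul_mem _ _ (K.sub_starProjection_mem_orthogonal (c i))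
  have hspan : span ℝ (c '' ↑(insert i S)) = K ⊔ ℝ ∙ u := by
    rw [Finset.coe_insert, Set.image_insert_eq, span_insert, sup_comm,
      span_singleton_smul_eq (inv_ne_zero (norm_ne_zero_iff.2 hw)).isUnit,
      sup_span_singleton_sub (K.starProjection_apply_mem _)]
  let t : EuclideanSpace ℝ (Fin n) := WithLp.toLp 2 fun j ↦ ⟪u, c j⟫_ℝ
  have hdrop : F S - F (insert i S) = ‖t‖ ^ 2 := by
    have hterm : ∀ j, ‖c j - K.starProjection (c j)‖ ^ 2
        - ‖c j - (K ⊔ ℝ ∙ u).starProjection (c j)‖ ^ 2 = ‖t j‖ ^ 2 := fun j ↦ by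
      rw [norm_sub_starProjection_sup_span_singleton_sq huK hu1]
      ring
    rw [hF, hF, hspan, ← Finset.sum_sub_distrib, EuclideanSpace.norm_sq_eq t]
    simp only [← starProjection_apply]
    exact Finset.sum_congr rfl fun j _ ↦ hterm j
  let A : EuclideanSpace ℝ (Fin n) →L[ℝ] EuclideanSpace ℝ (Fin m) :=
    LinearMap.toContinuousLinearMap
      ((Fintype.linearCombination ℝ c).comp (WithLp.linearEquiv 2 ℝ (Fin n → ℝ)).toLinearMap)
  have hA : ∀ x, A x = ∑ j, x j • c j := fun x ↦ rfl
  have hAt : ∀ x, ⟪A x, u⟫_ℝ = ⟪x, t⟫_ℝ := fun x ↦ by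
    rw [hA, sum_inner, PiLp.inner_apply]
    simp only [real_inner_smul_left, real_inner_comm, RCLike.inner_apply', conj_trivial, t]
  obtain ⟨v, hv⟩ : ∃ v, A v = u := by
    have hu : u ∈ span ℝ (Set.range c) :=
      span_mono (Set.image_subset_range _ _) (hspan ▸ mem_sup_right (mem_span_singleton_self u))
    obtain ⟨v, hv⟩ := (mem_span_range_iff_exists_fun ℝ).1 hu
    exact ⟨WithLp.toLp 2 v, hv⟩
  rw [hdrop]
  exact ⟨sInf_le_norm_sq_of_inner_apply_eq A.toLinearMap hv hu1 hAt,
    norm_sq_le_sSup_of_inner_apply_eq A hu1.le hAt⟩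
end

section
/- Let c_1,…,c_n be linearly independent vectors in ℝ^m. For S ⊆ {1,…,n}, let proj_S denote the orthogonal projection onto span{c_i : i ∈ S}, and define F(S) = ∑_{j=1}^n ‖c_j − proj_S(c_j)‖². Then for every i ∈ {1,…,n} and all S, T ⊆ {1,…,n}∖{i}: (F(S) − F(S ∪ {i})) · min_{‖x‖=1} ‖∑_j x_j c_j‖² ≤ (F(T) − F(T ∪ {i})) · max_{‖x‖=1} ‖∑_j x_j c_j‖². In particular, if c is the generalized curvature of F and κ the condition number of the matrix A with columns c_1,…,c_n, then 1/(1−c) ≤ κ². -/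
/-!
Adding column `i` to `S` enlarges `span (c '' S)` by the line through the residual `w` of `c i`
modulo that span, and `w` is orthogonal to it; so the marginal decrease of `F` is
`∑ j, ⟪c j, w⟫² / ‖w‖² = ‖Aᵀ w‖² / ‖w‖²` (here `Aᵀ w` is `innerVector c w`). As `w` lies in the
column space of `A`, this quotient lies between `minA²` and `maxA²`, and linear independence makes
`minA > 0`; both claims follow by comparing two such quotients.
-/

open Submodule NormedSpace

theorem Submodule.sup_span_singleton_sub_s11 {R M : Type*} [Ring R] [AddCommGroup M] [Module R M]
    {K : Submodule R M} {k : M} (hk : k ∈ K) (x : M) :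
    K ⊔ R ∙ (x - k) = K ⊔ R ∙ x := by
  refine le_antisymm (sup_le le_sup_left ?_) (sup_le le_sup_left ?_) <;>
    rw [span_singleton_le_iff_mem]
  · exact sub_mem (mem_sup_right (mem_span_singleton_self x)) (mem_sup_left hk)
  · simpa using add_mem (mem_sup_right (mem_span_singleton_self (x - k))) (mem_sup_left hk)

section Projection

variable {𝕜 E : Type*} [RCLike 𝕜] [NormedAddCommGroup E] [InnerProductSpace 𝕜 E]
  {U V : Submodule 𝕜 E} [U.HasOrthogonalProjection] [V.HasOrthogonalProjection]
  [(U ⊔ V).HasOrthogonalProjection]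

theorem Submodule.IsOrtho.starProjection_sup_apply (h : U ⟂ V) (v : E) :
    (U ⊔ V).starProjection v = U.starProjection v + V.starProjection v := by
  refine eq_starProjection_of_mem_orthogonal
    (add_mem (mem_sup_left (starProjection_apply_mem U v))
      (mem_sup_right (starProjection_apply_mem V v))) ?_
  rw [← inf_orthogonal]
  refine ⟨?_, ?_⟩
  · rw [sub_add_eq_sub_sub]
    exact sub_mem (sub_starProjection_mem_orthogonal v) (h.symm (starProjection_apply_mem V v))
  · rw [add_comm, sub_add_eq_sub_sub]
    exact sub_mem (sub_starProjection_mem_orthogonal v) (h (starProjection_apply_mem U v))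

theorem Submodule.IsOrtho.norm_sub_starProjection_sup_sq (h : U ⟂ V) (v : E) :
    ‖v - (U ⊔ V).starProjection v‖ ^ 2 =
      ‖v - U.starProjection v‖ ^ 2 - ‖V.starProjection v‖ ^ 2 := by
  have hr : v - (U ⊔ V).starProjection v ∈ Vᗮ :=
    orthogonal_le le_sup_right (sub_starProjection_mem_orthogonal v)
  have hsplit : v - U.starProjection v = (v - (U ⊔ V).starProjection v) + V.starProjection v := by
    rw [h.starProjection_sup_apply]; abel
  rw [hsplit, sq, sq, norm_add_sq_eq_norm_sq_add_norm_sq_of_inner_eq_zero _ _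
    ((mem_orthogonal' _ _).1 hr _ (starProjection_apply_mem V v))]
  ring

end Projection

theorem norm_starProjection_span_singleton_sq {E : Type*} [NormedAddCommGroup E]
    [InnerProductSpace ℝ E] (w v : E) :
    ‖(ℝ ∙ w).starProjection v‖ ^ 2 = inner ℝ w v ^ 2 / ‖w‖ ^ 2 := by
  rcases eq_or_ne w 0 with rfl | hw
  · simp
  rw [starProjection_singleton, norm_smul, Real.norm_eq_abs, mul_pow, sq_abs,
    RCLike.ofReal_real_eq_id, id]
  field_simp [norm_ne_zero_iff.2 hw]

section UnitSphere

variable {E F : Type*} [NormedAddCommGroup E] [NormedSpace ℝ E] [SeminormedAddCommGroup F]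
  [NormedSpace ℝ F] (f : E →ₗ[ℝ] F)

theorem LinearMap.norm_apply_eq_norm_mul_norm_apply_normalize (x : E) :
    ‖f x‖ = ‖x‖ * ‖f (normalize x)‖ := by
  conv_lhs => rw [← norm_smul_normalize x, map_smul, norm_smul, norm_norm]

theorem LinearMap.norm_apply_le_mul_norm_of_unit {M : ℝ} (h : ∀ x, ‖x‖ = 1 → ‖f x‖ ≤ M) (x : E) :
    ‖f x‖ ≤ M * ‖x‖ := by
  rcases eq_or_ne x 0 with rfl | hx
  · simp
  rw [f.norm_apply_eq_norm_mul_norm_apply_normalize, mul_comm]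
  exact mul_le_mul_of_nonneg_right (h _ (norm_normalize hx)) (norm_nonneg x)

theorem LinearMap.mul_norm_le_norm_apply_of_unit {m : ℝ} (h : ∀ x, ‖x‖ = 1 → m ≤ ‖f x‖) (x : E) :
    m * ‖x‖ ≤ ‖f x‖ := by
  rcases eq_or_ne x 0 with rfl | hx
  · simp
  rw [f.norm_apply_eq_norm_mul_norm_apply_normalize, mul_comm]
  exact mul_le_mul_of_nonneg_left (h _ (norm_normalize hx)) (norm_nonneg x)

end UnitSphere

section Columns

variable {ι E : Type*} [Fintype ι] [NormedAddCommGroup E] [InnerProductSpace ℝ E] (c : ι → E)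

noncomputable def combination : EuclideanSpace ℝ ι →ₗ[ℝ] E :=
  Fintype.linearCombination ℝ c ∘ₗ (WithLp.linearEquiv 2 ℝ (ι → ℝ)).toLinearMap

theorem combination_apply (x : EuclideanSpace ℝ ι) : combination c x = ∑ j, x j • c j := rfl

def unitColumnNorms : Set ℝ := {y | ∃ x : EuclideanSpace ℝ ι, ‖x‖ = 1 ∧ y = ‖∑ j, x j • c j‖}

def innerVector (u : E) : EuclideanSpace ℝ ι := WithLp.toLp 2 fun j ↦ inner ℝ (c j) u

theorem norm_innerVector_sq (u : E) : ‖innerVector c u‖ ^ 2 = ∑ j, inner ℝ (c j) u ^ 2 := by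
  simp [EuclideanSpace.norm_sq_eq, innerVector]

theorem inner_combination (x : EuclideanSpace ℝ ι) (u : E) :
    inner ℝ (combination c x) u = inner ℝ x (innerVector c u) := by
  simp [combination_apply, sum_inner, real_inner_smul_left, innerVector, PiLp.inner_apply, mul_comm]

theorem norm_innerVector_le {M : ℝ} (hM0 : 0 ≤ M)
    (hM : ∀ x : EuclideanSpace ℝ ι, ‖x‖ = 1 → ‖combination c x‖ ≤ M) (u : E) :
    ‖innerVector c u‖ ≤ M * ‖u‖ := by
  have key : ‖innerVector c u‖ ^ 2 ≤ M * ‖u‖ * ‖innerVector c u‖ :=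
    calc ‖innerVector c u‖ ^ 2 = inner ℝ (combination c (innerVector c u)) u := by
          rw [inner_combination, real_inner_self_eq_norm_sq]
      _ ≤ ‖combination c (innerVector c u)‖ * ‖u‖ := real_inner_le_norm _ _
      _ ≤ M * ‖innerVector c u‖ * ‖u‖ := by
          gcongr; exact (combination c).norm_apply_le_mul_norm_of_unit hM _
      _ = M * ‖u‖ * ‖innerVector c u‖ := by ring
  nlinarith [norm_nonneg (innerVector c u), mul_nonneg hM0 (norm_nonneg u)]

theorem mul_norm_le_norm_innerVector {m : ℝ} (hm0 : 0 ≤ m)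
    (hm : ∀ x : EuclideanSpace ℝ ι, ‖x‖ = 1 → m ≤ ‖combination c x‖) {u : E}
    (hu : u ∈ span ℝ (Set.range c)) : m * ‖u‖ ≤ ‖innerVector c u‖ := by
  obtain ⟨y, hy⟩ := (mem_span_range_iff_exists_fun ℝ).1 hu
  set x : EuclideanSpace ℝ ι := WithLp.toLp 2 y
  have hx : combination c x = u := hy
  have h1 : ‖u‖ ^ 2 ≤ ‖x‖ * ‖innerVector c u‖ := by
    rw [← real_inner_self_eq_norm_sq]
    nth_rw 1 [← hx]
    rw [inner_combination]
    exact real_inner_le_norm _ _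
  have h2 : m * ‖x‖ ≤ ‖u‖ := hx ▸ (combination c).mul_norm_le_norm_apply_of_unit hm x
  rcases (norm_nonneg u).eq_or_lt with h0 | hpos
  · rw [← h0, mul_zero]; exact norm_nonneg _
  · nlinarith [mul_le_mul_of_nonneg_left h1 hm0,
      mul_le_mul_of_nonneg_right h2 (norm_nonneg (innerVector c u))]

variable {c}

theorem IsGLB.unitColumnNorms_nonneg {a : ℝ} (ha : IsGLB (unitColumnNorms c) a) : 0 ≤ a :=
  ha.2 fun _ ⟨_, _, hy⟩ ↦ hy ▸ norm_nonneg _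

theorem IsLUB.unitColumnNorms_nonneg [Nonempty ι] {b : ℝ} (hb : IsLUB (unitColumnNorms c) b) :
    0 ≤ b :=
  have ⟨x, hx⟩ := exists_norm_eq (EuclideanSpace ℝ ι) zero_le_one
  (norm_nonneg _).trans (hb.1 ⟨x, hx, rfl⟩)

theorem IsGLB.unitColumnNorms_pos (hli : LinearIndependent ℝ c) {a : ℝ}
    (ha : IsGLB (unitColumnNorms c) a) : 0 < a := by
  have hinj : Function.Injective (combination c) :=
    hli.fintypeLinearCombination_injective.comp (WithLp.linearEquiv 2 ℝ (ι → ℝ)).injective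
  obtain ⟨K, -, hK⟩ := (combination c).injective_iff_antilipschitz.1 hinj
  obtain ⟨ε, hε, hbound⟩ := antilipschitzWith_iff_exists_mul_le_norm.1 ⟨K, hK⟩
  refine hε.trans_le (ha.2 fun _ ⟨x, hx, hy⟩ ↦ ?_)
  rw [hy, ← combination_apply]
  simpa [hx] using hbound x

end Columns

section Residual

variable {ι E : Type*} [Fintype ι] [NormedAddCommGroup E] [InnerProductSpace ℝ E]
  [FiniteDimensional ℝ E] (c : ι → E)

noncomputable def frobeniusResidual (S : Finset ι) : ℝ :=
  ∑ j, ‖c j - (span ℝ (c '' S)).starProjection (c j)‖ ^ 2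

theorem frobeniusResidual_sub_insert [DecidableEq ι] (i : ι) (S : Finset ι) :
    frobeniusResidual c S - frobeniusResidual c (insert i S) =
      ‖innerVector c (c i - (span ℝ (c '' S)).starProjection (c i))‖ ^ 2 /
        ‖c i - (span ℝ (c '' S)).starProjection (c i)‖ ^ 2 := by
  set K := span ℝ (c '' S)
  set w := c i - K.starProjection (c i)
  have hortho : K ⟂ ℝ ∙ w := by
    rw [isOrtho_comm, isOrtho_iff_le, span_singleton_le_iff_mem]
    exact sub_starProjection_mem_orthogonal _
  have hspan : span ℝ (c '' ↑(insert i S)) = K ⊔ ℝ ∙ w := by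
    rw [Finset.coe_insert, Set.image_insert_eq, span_insert, sup_comm,
      sup_span_singleton_sub_s11 (starProjection_apply_mem K _)]
  have hterm (j : ι) : ‖c j - K.starProjection (c j)‖ ^ 2 -
      ‖c j - (K ⊔ ℝ ∙ w).starProjection (c j)‖ ^ 2 = inner ℝ (c j) w ^ 2 / ‖w‖ ^ 2 := by
    rw [hortho.norm_sub_starProjection_sup_sq, norm_starProjection_span_singleton_sq,
      real_inner_comm]
    ring
  simp only [frobeniusResidual, hspan]
  rw [← Finset.sum_sub_distrib, norm_innerVector_sq, Finset.sum_div]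
  exact Finset.sum_congr rfl fun j _ ↦ hterm j

variable {c}

theorem frobeniusResidual_sub_insert_le_sq [DecidableEq ι] {b : ℝ}
    (hb : IsLUB (unitColumnNorms c) b) (i : ι) (S : Finset ι) :
    frobeniusResidual c S - frobeniusResidual c (insert i S) ≤ b ^ 2 := by
  rw [frobeniusResidual_sub_insert]
  refine div_le_of_le_mul₀ (sq_nonneg _) (sq_nonneg _) ?_
  rw [← mul_pow]
  have : Nonempty ι := ⟨i⟩
  exact pow_le_pow_left₀ (norm_nonneg _)
    (norm_innerVector_le c hb.unitColumnNorms_nonneg (fun x hx ↦ hb.1 ⟨x, hx, rfl⟩) _) 2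

theorem sq_le_frobeniusResidual_sub_insert [DecidableEq ι] (hli : LinearIndependent ℝ c)
    {a : ℝ} (ha : IsGLB (unitColumnNorms c) a) {i : ι} {S : Finset ι} (hi : i ∉ S) :
    a ^ 2 ≤ frobeniusResidual c S - frobeniusResidual c (insert i S) := by
  set K := span ℝ (c '' S)
  have hw : c i - K.starProjection (c i) ≠ 0 := by
    rw [sub_ne_zero]
    exact fun h ↦ hli.notMem_span_image (by simpa using hi) (h ▸ starProjection_apply_mem K _)
  have hw_mem : c i - K.starProjection (c i) ∈ span ℝ (Set.range c) :=
    sub_mem (subset_span (Set.mem_range_self i))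
      (span_mono (Set.image_subset_range c S) (starProjection_apply_mem K _))
  rw [frobeniusResidual_sub_insert, le_div_iff₀ (by positivity), ← mul_pow]
  exact pow_le_pow_left₀ (mul_nonneg ha.unitColumnNorms_nonneg (norm_nonneg _))
    (mul_norm_le_norm_innerVector c ha.unitColumnNorms_nonneg (fun x hx ↦ ha.1 ⟨x, hx, rfl⟩)
      hw_mem) 2

end Residual

/-- Lemma 8.1 (curvature vs. condition number for column-subset selection): for linearly
independent columns, the marginal decreases of `F` satisfy
`(F(S) - F(S∪{i}))·min_{‖x‖=1}‖Ax‖² ≤ (F(T) - F(T∪{i}))·max_{‖x‖=1}‖Ax‖²`; in particular,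
if `c` is the generalized curvature of `F` and `κ` the condition number of `A`,
then `1/(1-c) ≤ κ²`. -/
theorem stmt_11 {m n : ℕ} (c : Fin n → EuclideanSpace ℝ (Fin m))
    (hli : LinearIndependent ℝ c)
    (F : Finset (Fin n) → ℝ)
    (hF : ∀ S : Finset (Fin n), F S = ∑ j : Fin n,
      ‖c j - (Submodule.orthogonalProjectionOnto (Submodule.span ℝ (c '' ↑S)) (c j) : EuclideanSpace ℝ (Fin m))‖ ^ 2)
    (minA maxA : ℝ)
    (hmin : IsGLB {y : ℝ | ∃ x : EuclideanSpace ℝ (Fin n), ‖x‖ = 1 ∧ y = ‖∑ j : Fin n, x j • c j‖} minA)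
    (hmax : IsLUB {y : ℝ | ∃ x : EuclideanSpace ℝ (Fin n), ‖x‖ = 1 ∧ y = ‖∑ j : Fin n, x j • c j‖} maxA)
    (curv κ : ℝ) (hκ : κ = maxA / minA)
    (hcurv : 1 / (1 - curv) = sSup {y : ℝ | ∃ (j : Fin n) (S T : Finset (Fin n)),
      j ∉ S ∧ j ∉ T ∧ y = |F (insert j S) - F S| / |F (insert j T) - F T|}) :
    (∀ (i : Fin n) (S T : Finset (Fin n)), i ∉ S → i ∉ T →
      (F S - F (insert i S)) * minA ^ 2 ≤ (F T - F (insert i T)) * maxA ^ 2) ∧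
    1 / (1 - curv) ≤ κ ^ 2 := by
  obtain rfl : F = frobeniusResidual c := funext hF
  have hlow {i} {S} (hi : i ∉ S) := sq_le_frobeniusResidual_sub_insert hli hmin hi
  have hup := frobeniusResidual_sub_insert_le_sq hmax
  have hmin_pos : 0 < minA := hmin.unitColumnNorms_pos hli
  refine ⟨fun i S T hiS hiT ↦ ?_, ?_⟩
  · calc (frobeniusResidual c S - frobeniusResidual c (insert i S)) * minA ^ 2
        ≤ maxA ^ 2 * minA ^ 2 := by gcongr; exact hup i S
      _ ≤ maxA ^ 2 * (frobeniusResidual c T - frobeniusResidual c (insert i T)) := by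
        gcongr; exact hlow hiT
      _ = _ := mul_comm _ _
  · rw [hcurv, hκ, div_pow]
    refine Real.sSup_le ?_ (by positivity)
    rintro _ ⟨j, S, T, hjS, hjT, rfl⟩
    rw [abs_sub_comm, abs_of_nonneg ((sq_nonneg _).trans (hlow hjS)), abs_sub_comm,
      abs_of_nonneg ((sq_nonneg _).trans (hlow hjT))]
    exact div_le_div₀ (sq_nonneg _) (hup j S) (by positivity) (hlow hjT)
end

section
/- Let f : 2^X → ℝ be a nonnegative, monotone increasing, submodular function on a finite ground set X. Define ℓ(A) = ∑_{j∈A} f_{X∖{j}}(j) and g(A) = f(A) − ℓ(A). Then g is submodular, monotone increasing, and nonnegative. -/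
/-- Lemma A.1: for a nonnegative, monotone increasing, submodular `f`, with
`ℓ(A) = ∑_{j∈A} f_{X∖{j}}(j)` and `g = f - ℓ`, the function `g` is submodular, monotone
increasing, and nonnegative. -/
theorem stmt_13 {α : Type*} [Fintype α] [DecidableEq α]
    (f : Finset α → ℝ)
    (hnonneg : ∀ A : Finset α, 0 ≤ f A)
    (hmono : ∀ A B : Finset α, A ⊆ B → f A ≤ f B)
    (hsubmod : ∀ A B : Finset α, A ⊆ B → ∀ j, j ∉ B →
      f (insert j B) - f B ≤ f (insert j A) - f A)
    (ℓ g : Finset α → ℝ)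
    (hℓ : ∀ A : Finset α, ℓ A = ∑ j ∈ A, (f Finset.univ - f (Finset.univ.erase j)))
    (hg : ∀ A : Finset α, g A = f A - ℓ A) :
    (∀ A B : Finset α, A ⊆ B → ∀ j, j ∉ B →
      g (insert j B) - g B ≤ g (insert j A) - g A) ∧
    (∀ A B : Finset α, A ⊆ B → g A ≤ g B) ∧
    (∀ A : Finset α, 0 ≤ g A) := by
  have hmarg : ∀ (A : Finset α) (j : α), j ∉ A →
      g (insert j A) - g A = f (insert j A) - f A - (f Finset.univ - f (Finset.univ.erase j)) := by
    intro A j hj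
    rw [hg, hg, hℓ, hℓ, Finset.sum_insert hj]
    ring
  have hsub : ∀ A B : Finset α, A ⊆ B → ∀ j, j ∉ B →
      g (insert j B) - g B ≤ g (insert j A) - g A := by
    intro A B hAB j hjB
    rw [hmarg A j (fun h => hjB (hAB h)), hmarg B j hjB]
    have := hsubmod A B hAB j hjB
    linarith
  have hstep : ∀ (A : Finset α) (j : α), j ∉ A → g A ≤ g (insert j A) := by
    intro A j hj
    have h1 : A ⊆ Finset.univ.erase j := fun x hx =>
      Finset.mem_erase.mpr ⟨fun h => hj (h ▸ hx), Finset.mem_univ x⟩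
    have h2 := hsubmod A (Finset.univ.erase j) h1 j (Finset.notMem_erase j _)
    rw [Finset.insert_erase (Finset.mem_univ j)] at h2
    have := hmarg A j hj
    linarith
  have hmonog : ∀ A B : Finset α, A ⊆ B → g A ≤ g B := by
    intro A B hAB
    have : ∀ s : Finset α, g A ≤ g (A ∪ s) := by
      intro s
      induction s using Finset.induction_on with
      | empty => simp
      | @insert a s ha ih =>
        rcases Decidable.em (a ∈ A ∪ s) with h | h
        · rw [Finset.union_insert, Finset.insert_eq_self.mpr h]; exact ih
        · rw [Finset.union_insert]
          exact le_trans ih (hstep _ a h)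
    have hB : B = A ∪ (B \ A) := by
      rw [Finset.union_sdiff_self_eq_union, Finset.union_eq_right.mpr hAB]
    rw [hB]; exact this _
  refine ⟨hsub, hmonog, fun A => ?_⟩
  have h0 : g ∅ = f ∅ := by rw [hg, hℓ]; simp
  have := hmonog ∅ A (Finset.empty_subset A)
  have := hnonneg ∅
  linarith
end

section
/- Let f : 2^X → ℝ be a nonnegative, monotone decreasing, supermodular function on a finite ground set X. Define ℓ(A) = ∑_{j∈A} f_∅(j) and g(A) = −ℓ(A) − f(X∖A). Then g is submodular and monotone increasing; moreover, if f(X) = 0 then g is nonnegative. -/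
/-!
Removing `j` from the complement `univ \ A` is adding `j` to `A`, so the marginal of `g` at `A` is
`-f_∅(j)` plus the marginal of `f` at `univ \ insert j A`. Complements reverse inclusion, so
supermodularity of `f` makes these marginals decrease in `A` (submodularity of `g`) and, compared
with the marginal at `∅`, nonnegative (monotonicity of `g`). Finally `g ∅ = -f univ`.
-/

open Finset

section

variable {α : Type*} [DecidableEq α]

theorem Finset.monotone_of_le_insert {β : Type*} [Preorder β] {g : Finset α → β}
    (h : ∀ A j, j ∉ A → g A ≤ g (insert j A)) : Monotone g :=
  (monotone_iff_forall_covBy g).2 fun A _ hAB => by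
    obtain ⟨j, hj, rfl⟩ := covBy_iff_exists_insert.1 hAB
    exact h A j hj

variable [Fintype α]

theorem Finset.univ_sdiff_eq_insert_univ_sdiff_insert {A : Finset α} {j : α} (hj : j ∉ A) :
    univ \ A = insert j (univ \ insert j A) := by
  rw [sdiff_insert, insert_erase (by simpa using hj)]

def complementDual (f : Finset α → ℝ) (A : Finset α) : ℝ :=
  -∑ j ∈ A, (f {j} - f ∅) - f (univ \ A)

theorem complementDual_empty (f : Finset α → ℝ) : complementDual f ∅ = -f univ := by
  simp [complementDual]

theorem complementDual_insert_sub (f : Finset α → ℝ) {A : Finset α} {j : α} (hj : j ∉ A) :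
    complementDual f (insert j A) - complementDual f A =
      (f (insert j (univ \ insert j A)) - f (univ \ insert j A)) - (f {j} - f ∅) := by
  rw [complementDual, complementDual, sum_insert hj, univ_sdiff_eq_insert_univ_sdiff_insert hj]
  ring

section Supermodular

variable {f : Finset α → ℝ}
  (hsupmod : ∀ A B : Finset α, A ⊆ B → ∀ j, j ∉ B →
    f (insert j A) - f A ≤ f (insert j B) - f B)
include hsupmod

theorem complementDual_insert_sub_antitone {A B : Finset α} (hAB : A ⊆ B) {j : α} (hjB : j ∉ B) :
    complementDual f (insert j B) - complementDual f B ≤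
      complementDual f (insert j A) - complementDual f A := by
  rw [complementDual_insert_sub f hjB, complementDual_insert_sub f fun hjA => hjB (hAB hjA)]
  have hcompl : univ \ insert j B ⊆ univ \ insert j A :=
    sdiff_subset_sdiff subset_rfl (insert_subset_insert j hAB)
  linarith [hsupmod _ _ hcompl j (by simp)]

theorem complementDual_monotone : Monotone (complementDual f) :=
  monotone_of_le_insert fun A j hj => by
    have := hsupmod ∅ (univ \ insert j A) (empty_subset _) j (by simp)
    rw [← sub_nonneg, complementDual_insert_sub f hj]
    simpa using this

end Supermodular

end

theorem stmt_14_general {α : Type*} [Fintype α] [DecidableEq α]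
    (f : Finset α → ℝ)
    (hsupmod : ∀ A B : Finset α, A ⊆ B → ∀ j, j ∉ B →
      f (insert j A) - f A ≤ f (insert j B) - f B)
    (ℓ g : Finset α → ℝ)
    (hℓ : ∀ A : Finset α, ℓ A = ∑ j ∈ A, (f {j} - f ∅))
    (hg : ∀ A : Finset α, g A = -ℓ A - f (Finset.univ \ A)) :
    (∀ A B : Finset α, A ⊆ B → ∀ j, j ∉ B →
      g (insert j B) - g B ≤ g (insert j A) - g A) ∧
    (∀ A B : Finset α, A ⊆ B → g A ≤ g B) ∧
    (f Finset.univ = 0 → ∀ A : Finset α, 0 ≤ g A) := by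
  obtain rfl : g = complementDual f := funext fun A => by rw [hg, hℓ, complementDual]
  refine ⟨fun A B hAB j hjB => complementDual_insert_sub_antitone hsupmod hAB hjB,
    fun A B hAB => complementDual_monotone hsupmod hAB, fun hfu A => ?_⟩
  calc 0 = complementDual f ∅ := by rw [complementDual_empty, hfu, neg_zero]
    _ ≤ complementDual f A := complementDual_monotone hsupmod (empty_subset A)

/-- Lemma A.2: for a nonnegative, monotone decreasing, supermodular `f`, with
`ℓ(A) = ∑_{j∈A} f_∅(j)` and `g(A) = -ℓ(A) - f(X∖A)`, the function `g` is submodular and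
monotone increasing; moreover, if `f(X) = 0` then `g` is nonnegative. -/
theorem stmt_14 {α : Type*} [Fintype α] [DecidableEq α]
    (f : Finset α → ℝ)
    (hnonneg : ∀ A : Finset α, 0 ≤ f A)
    (hmono : ∀ A B : Finset α, A ⊆ B → f B ≤ f A)
    (hsupmod : ∀ A B : Finset α, A ⊆ B → ∀ j, j ∉ B →
      f (insert j A) - f A ≤ f (insert j B) - f B)
    (ℓ g : Finset α → ℝ)
    (hℓ : ∀ A : Finset α, ℓ A = ∑ j ∈ A, (f {j} - f ∅))
    (hg : ∀ A : Finset α, g A = -ℓ A - f (Finset.univ \ A)) :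
    (∀ A B : Finset α, A ⊆ B → ∀ j, j ∉ B →
      g (insert j B) - g B ≤ g (insert j A) - g A) ∧
    (∀ A B : Finset α, A ⊆ B → g A ≤ g B) ∧
    (f Finset.univ = 0 → ∀ A : Finset α, 0 ≤ g A) :=
  stmt_14_general f hsupmod ℓ g hℓ hg
end

section
/- Let f : 2^X → ℝ be a nonnegative, monotone increasing, submodular function on a finite ground set X whose marginal values satisfy f_A(j) ≤ p for all A ⊆ X and j ∈ X, and let c ∈ (0,1]. Define f̂(A) = f(A) + ((1−c)/c)·|A|·p. Then f̂ is submodular, monotone increasing, and nonnegative, and f̂ has total curvature at most c, i.e., f̂_{X∖{j}}(j) ≥ (1−c)·f̂_∅(j) for every j ∈ X. -/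
/-- Lemma A.3: if `f` is nonnegative, monotone increasing, submodular with all marginal
values at most `p`, and `c ∈ (0,1]`, then `f̂(A) = f(A) + ((1-c)/c)·|A|·p` is submodular,
monotone increasing, nonnegative, and has total curvature at most `c`. -/
theorem stmt_15 {α : Type*} [Fintype α] [DecidableEq α]
    (f : Finset α → ℝ) (p : ℝ) (c : ℝ) (hc0 : 0 < c) (hc1 : c ≤ 1)
    (hnonneg : ∀ A : Finset α, 0 ≤ f A)
    (hmono : ∀ A B : Finset α, A ⊆ B → f A ≤ f B)
    (hsubmod : ∀ A B : Finset α, A ⊆ B → ∀ j, j ∉ B →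
      f (insert j B) - f B ≤ f (insert j A) - f A)
    (hmarg : ∀ (A : Finset α) (j : α), f (insert j A) - f A ≤ p)
    (fhat : Finset α → ℝ)
    (hfhat : ∀ A : Finset α, fhat A = f A + ((1 - c) / c) * (A.card : ℝ) * p) :
    (∀ A B : Finset α, A ⊆ B → ∀ j, j ∉ B →
      fhat (insert j B) - fhat B ≤ fhat (insert j A) - fhat A) ∧
    (∀ A B : Finset α, A ⊆ B → fhat A ≤ fhat B) ∧
    (∀ A : Finset α, 0 ≤ fhat A) ∧
    (∀ j : α, (1 - c) * (fhat {j} - fhat ∅) ≤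
      fhat Finset.univ - fhat (Finset.univ.erase j)) := by
  have hk : 0 ≤ (1 - c) / c := div_nonneg (by linarith) hc0.le
  have hp : ∀ j : α, 0 ≤ p := fun j => by
    have h1 := hmarg ∅ j
    have h2 := hmono ∅ (insert j ∅) (Finset.empty_subset _)
    linarith
  refine ⟨?_, ?_, ?_, ?_⟩
  · intro A B hAB j hjB
    have hjA : j ∉ A := fun h => hjB (hAB h)
    have hcardB : ((insert j B).card : ℝ) = B.card + 1 := by
      rw [Finset.card_insert_of_notMem hjB]; push_cast; ring
    have hcardA : ((insert j A).card : ℝ) = A.card + 1 := by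
      rw [Finset.card_insert_of_notMem hjA]; push_cast; ring
    have := hsubmod A B hAB j hjB
    simp only [hfhat, hcardA, hcardB]
    nlinarith
  · intro A B hAB
    have hcard : (A.card : ℝ) ≤ B.card := by
      exact_mod_cast Finset.card_le_card hAB
    have := hmono A B hAB
    simp only [hfhat]
    rcases Finset.eq_empty_or_nonempty B with rfl | ⟨j, hj⟩
    · simp_all [Finset.subset_empty.mp hAB]
    · have h2 : (1 - c) / c * A.card * p ≤ (1 - c) / c * B.card * p :=
        mul_le_mul_of_nonneg_right (mul_le_mul_of_nonneg_left hcard hk) (hp j)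
      linarith
  · intro A
    simp only [hfhat]
    rcases Finset.eq_empty_or_nonempty A with rfl | ⟨j, hj⟩
    · simp [hnonneg ∅]
    · have := hnonneg A
      have : (0:ℝ) ≤ (1 - c) / c * A.card * p := by
        have := hp j
        positivity
      linarith [hnonneg A]
  · intro j
    have hj : j ∈ (Finset.univ : Finset α) := Finset.mem_univ j
    have hins : insert j (Finset.univ.erase j) = (Finset.univ : Finset α) :=
      Finset.insert_erase hj
    have hcardn : (Finset.univ.erase j).card + 1 = (Finset.univ : Finset α).card :=
      Finset.card_erase_add_one hj
    have hcard : ((Finset.univ : Finset α).card : ℝ)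
        = (Finset.univ.erase j).card + 1 := by exact_mod_cast hcardn.symm
    have hmarg1 : f {j} - f ∅ ≤ p := by simpa using hmarg ∅ j
    have hmono1 : f (Finset.univ.erase j) ≤ f Finset.univ :=
      hmono _ _ (Finset.subset_univ _)
    have hcard1 : (({j} : Finset α).card : ℝ) = 1 := by simp
    have hk1 : (1 - c) / c * c = 1 - c := div_mul_cancel₀ _ hc0.ne'
    simp only [hfhat, hcard, hcard1, Finset.card_empty, Nat.cast_zero]
    have := hp j
    nlinarith
end

section
/- Let M be an n×n real symmetric positive semidefinite matrix all of whose eigenvalues are at least 1 (equivalently, M − I is positive semidefinite). For S ⊆ {1,…,n}, let M[S,S] denote the principal submatrix of M with rows and columns indexed by S (with det M[∅,∅] = 1). Then the set function f(S) = ln det M[S,S] is monotone nondecreasing: for all S ⊆ T ⊆ {1,…,n}, det M[S,S] ≤ det M[T,T]. -/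
/-!
Write `M[T,T]`, after reordering `T` as `S ⊔ (T \ S)`, as a block matrix with top-left block
`A = M[S,S]`. Then `det M[T,T] = det A · det (D - Bᴴ A⁻¹ B)`, and both factors are at least `1`:
`A - 1` is a principal submatrix of `M - 1`, and the Schur complement of `A` inside the positive
semidefinite matrix `M[T,T] - diag(0, 1)` shows that `D - Bᴴ A⁻¹ B - 1` is positive semidefinite.
A Hermitian matrix `N` with `N - 1 ⪰ 0` has all eigenvalues at least `1`, hence `det N ≥ 1`.
-/

open scoped ComplexOrder

namespace Matrix

variable {𝕜 m p : Type*} [RCLike 𝕜]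

theorem PosSemidef.submatrix_sub_one [DecidableEq m] [DecidableEq p] {N : Matrix p p 𝕜}
    (h : (N - 1).PosSemidef) {f : m → p} (hf : Function.Injective f) :
    (N.submatrix f f - 1).PosSemidef := by
  simpa [submatrix_sub, submatrix_one f hf] using h.submatrix f

theorem IsHermitian.toBlocks₂₁_eq {N : Matrix (m ⊕ p) (m ⊕ p) 𝕜} (hN : N.IsHermitian) :
    N.toBlocks₂₁ = N.toBlocks₁₂ᴴ := by
  ext i j
  simp [toBlocks₂₁, toBlocks₁₂, hN.apply]

variable [Fintype m] [DecidableEq m]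

theorem IsHermitian.one_le_eigenvalues {N : Matrix m m 𝕜} (hN : N.IsHermitian)
    (h : (N - 1).PosSemidef) (i : m) : 1 ≤ hN.eigenvalues i := by
  have hmem : hN.eigenvalues i - 1 ∈ spectrum ℝ (N - 1) := by
    rw [← map_one (algebraMap ℝ (Matrix m m 𝕜)), ← spectrum.sub_singleton_eq]
    exact Set.sub_mem_sub (hN.eigenvalues_mem_spectrum_real i) rfl
  rw [h.1.spectrum_real_eq_range_eigenvalues] at hmem
  obtain ⟨j, hj⟩ := hmem
  linarith [h.eigenvalues_nonneg j]

theorem one_le_det_of_posSemidef_sub_one {N : Matrix m m 𝕜} (h : (N - 1).PosSemidef) :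
    1 ≤ N.det := by
  have hN : N.IsHermitian := by simpa using h.1.add isHermitian_one
  rw [hN.det_eq_prod_eigenvalues, ← RCLike.ofReal_prod]
  exact_mod_cast Finset.one_le_prod fun i _ => hN.one_le_eigenvalues h i

variable [Fintype p] [DecidableEq p]

theorem det_toBlocks₁₁_le_det {N : Matrix (m ⊕ p) (m ⊕ p) 𝕜} (h : (N - 1).PosSemidef) :
    N.toBlocks₁₁.det ≤ N.det := by
  have hN : N.IsHermitian := by simpa using h.1.add isHermitian_one
  set A := N.toBlocks₁₁
  set B := N.toBlocks₁₂
  set D := N.toBlocks₂₂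
  have hblocks : N = fromBlocks A B Bᴴ D := by
    rw [← hN.toBlocks₂₁_eq, fromBlocks_toBlocks]
  have hA : (A - 1).PosSemidef := h.submatrix_sub_one Sum.inl_injective
  have hApd : A.PosDef := by simpa using PosDef.posSemidef_add hA PosDef.one
  have : Invertible A := hApd.isUnit.invertible
  have hschur : (D - Bᴴ * A⁻¹ * B - 1).PosSemidef := by
    have hshift : fromBlocks A B Bᴴ (D - 1) = (N - 1) + diagonal (Sum.elim 1 0) := by
      rw [hblocks]
      ext (i | i) (j | j) <;> simp [one_apply, diagonal_apply]
    have := (hApd.fromBlocks₁₁ B (D - 1)).mp (hshift ▸ h.add (by simp))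
    rwa [sub_right_comm] at this
  calc A.det ≤ A.det * (D - Bᴴ * A⁻¹ * B).det :=
        le_mul_of_one_le_right hApd.det_pos.le (one_le_det_of_posSemidef_sub_one hschur)
    _ = N.det := by rw [hblocks, det_fromBlocks₁₁, invOf_eq_nonsing_inv]

theorem det_submatrix_le_det_submatrix_of_subset {ι : Type*} [DecidableEq ι] {M : Matrix ι ι 𝕜}
    (h : (M - 1).PosSemidef) {S T : Finset ι} (hST : S ⊆ T) :
    (M.submatrix (fun i : S => (i : ι)) (fun i : S => (i : ι))).det ≤
      (M.submatrix (fun i : T => (i : ι)) (fun i : T => (i : ι))).det := by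
  set MT := M.submatrix (fun i : T => (i : ι)) (fun i : T => (i : ι))
  let split := Equiv.sumCompl fun x : T => (x : ι) ∈ S
  let e : {x : T // (x : ι) ∈ S} ≃ S := Equiv.subtypeSubtypeEquivSubtype fun hx => hST hx
  have hsplit : (MT.submatrix split split - 1).PosSemidef :=
    (h.submatrix_sub_one Subtype.val_injective).submatrix_sub_one split.injective
  calc _ = ((M.submatrix (fun i : S => (i : ι)) (fun i : S => (i : ι))).submatrix e e).det :=
        (det_submatrix_equiv_self e _).symm
    _ = (MT.submatrix split split).toBlocks₁₁.det := rfl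
    _ ≤ (MT.submatrix split split).det := det_toBlocks₁₁_le_det hsplit
    _ = MT.det := det_submatrix_equiv_self split MT

end Matrix

theorem stmt_17_general {n : ℕ} (M : Matrix (Fin n) (Fin n) ℝ)
    (hpsd1 : (M - 1).PosSemidef) :
    ∀ S T : Finset (Fin n), S ⊆ T →
      (M.submatrix (fun i : S => (i : Fin n)) (fun i : S => (i : Fin n))).det ≤
      (M.submatrix (fun i : T => (i : Fin n)) (fun i : T => (i : Fin n))).det :=
  fun _ _ hST => Matrix.det_submatrix_le_det_submatrix_of_subset hpsd1 hST

/-- Maximum entropy sampling objective is monotone: if `M` is a real symmetric positive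
semidefinite matrix with all eigenvalues at least `1` (equivalently, `M - I` is positive
semidefinite), then `S ⊆ T` implies `det M[S,S] ≤ det M[T,T]`. -/
theorem stmt_17 {n : ℕ} (M : Matrix (Fin n) (Fin n) ℝ)
    (hpsd : M.PosSemidef) (hpsd1 : (M - 1).PosSemidef) :
    ∀ S T : Finset (Fin n), S ⊆ T →
      (M.submatrix (fun i : S => (i : Fin n)) (fun i : S => (i : Fin n))).det ≤
      (M.submatrix (fun i : T => (i : Fin n)) (fun i : T => (i : Fin n))).det :=
  stmt_17_general M hpsd1
end

section
/- Let λ ≥ 1 and let M be an n×n real symmetric positive definite matrix with I ⪯ M ⪯ λ·I (all eigenvalues of M lie in [1, λ]). Then for every index j ∈ {1,…,n}, ln det M − ln det M[{1,…,n}∖{j}, {1,…,n}∖{j}] ≥ (1/λ)·ln M_{jj}. Consequently, the set function f(S) = ln det M[S,S] has total curvature at most 1 − 1/λ. -/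
/-!
Deleting row and column `j` leaves the determinant `(M⁻¹)ⱼⱼ · det M`, so the claim reads
`ln Mⱼⱼ / λ ≤ -ln (M⁻¹)ⱼⱼ`. As a product of commuting positive semidefinite matrices,
`(M - 1)(λ - M)M⁻¹ = (λ + 1) - M - λM⁻¹` is positive semidefinite, and its `(j, j)` entry gives
`λ (M⁻¹)ⱼⱼ + Mⱼⱼ ≤ λ + 1`. Together with `ln x ≤ x - 1` applied to `Mⱼⱼ` and to `(M⁻¹)ⱼⱼ` this
yields the bound.
-/

open Matrix

theorem one_div_mul_log_le_neg_log_of_mul_add_le {lam d p : ℝ} (hlam : 0 < lam) (hd : 0 < d)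
    (hp : 0 < p) (h : lam * p + d ≤ lam + 1) : 1 / lam * Real.log d ≤ -Real.log p := by
  calc 1 / lam * Real.log d ≤ 1 / lam * (d - 1) := by
        gcongr; exact Real.log_le_sub_one_of_pos hd
    _ ≤ 1 - p := by rw [div_mul_eq_mul_div, one_mul, div_le_iff₀ hlam]; linarith
    _ ≤ -Real.log p := by linarith [Real.log_le_sub_one_of_pos hp]

section
open scoped MatrixOrder
variable {n : Type*} [Fintype n] [DecidableEq n]

theorem Matrix.PosDef.posSemidef_smul_one_sub_sub_smul_inv {lam : ℝ} {M : Matrix n n ℝ}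
    (hM : M.PosDef) (h1 : (M - 1).PosSemidef) (h2 : (lam • (1 : Matrix n n ℝ) - M).PosSemidef) :
    ((lam + 1) • (1 : Matrix n n ℝ) - M - lam • M⁻¹).PosSemidef := by
  have hdet : IsUnit M.det := M.isUnit_iff_isUnit_det.mp hM.isUnit
  have hprod : (M - 1) * (lam • 1 - M) * M⁻¹ = (lam + 1) • 1 - M - lam • M⁻¹ := by
    simp only [sub_mul, mul_sub, smul_mul_assoc, mul_smul_comm, one_mul, mul_one,
      M.mul_nonsing_inv hdet, M.mul_nonsing_inv_cancel_right _ hdet]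
    module
  have hcomm : Commute M M⁻¹ := (M.mul_nonsing_inv hdet).trans (M.nonsing_inv_mul hdet).symm
  have hcomm₁ : Commute (M - 1) (lam • 1 - M) :=
    ((Commute.one_right _).smul_right lam).sub_right
      ((Commute.refl M).sub_left (Commute.one_left M))
  have hcomm₂ : Commute ((M - 1) * (lam • 1 - M)) M⁻¹ :=
    (hcomm.sub_left (Commute.one_left _)).mul_left
      (((Commute.one_left _).smul_left lam).sub_left hcomm)
  rw [← nonneg_iff_posSemidef, ← hprod]
  exact Commute.mul_nonneg (Commute.mul_nonneg h1.nonneg h2.nonneg hcomm₁)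
    hM.posSemidef.inv.nonneg hcomm₂

theorem Matrix.inv_apply_mul_det {K : Type*} [Field K] {A : Matrix n n K} (hA : A.det ≠ 0)
    (i j : n) : A⁻¹ i j * A.det = A.adjugate i j := by
  rw [inv_def, smul_apply, Ring.inverse_eq_inv', smul_eq_mul]
  field_simp

theorem Matrix.det_submatrix_univ {α : Type*} [CommRing α] (A : Matrix n n α) :
    (A.submatrix (fun i : (Finset.univ : Finset n) => (i : n))
      (fun i : (Finset.univ : Finset n) => (i : n))).det = A.det :=
  det_submatrix_equiv_self (Equiv.subtypeUnivEquiv Finset.mem_univ) A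

end

theorem Matrix.det_submatrix_erase_eq_adjugate {α : Type*} [CommRing α] {n : ℕ}
    (A : Matrix (Fin n) (Fin n) α) (j : Fin n) :
    (A.submatrix (fun i : (Finset.univ.erase j) => (i : Fin n))
      (fun i : (Finset.univ.erase j) => (i : Fin n))).det = A.adjugate j j := by
  obtain ⟨m, rfl⟩ : ∃ m, n = m + 1 := ⟨n - 1, by have := j.pos; omega⟩
  have hrange : ∀ x : Fin (m + 1), x ∈ Set.range j.succAbove ↔ x ∈ Finset.univ.erase j := by
    simp [Fin.range_succAbove]
  let e : Fin m ≃ Finset.univ.erase j :=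
    (Equiv.ofInjective _ (Fin.succAbove_right_injective (p := j))).trans
      (Equiv.subtypeEquivRight hrange)
  rw [adjugate_fin_succ_eq_det_submatrix, ← det_submatrix_equiv_self e, submatrix_submatrix,
    (Even.neg_one_pow ⟨j, rfl⟩ : (-1 : α) ^ ((j : ℕ) + j) = 1), one_mul]
  rfl

/-- Curvature bound for maximum entropy sampling: if `M` is real symmetric positive definite
with `I ⪯ M ⪯ λ·I` for some `λ ≥ 1`, then for every index `j`,
`ln det M - ln det M[X∖{j}, X∖{j}] ≥ (1/λ)·ln M_{jj}`; consequently, the set function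
`f(S) = ln det M[S,S]` has total curvature at most `1 - 1/λ`. -/
theorem stmt_18 {n : ℕ} (lam : ℝ) (hlam : 1 ≤ lam)
    (M : Matrix (Fin n) (Fin n) ℝ) (hpd : M.PosDef)
    (h1 : (M - 1).PosSemidef)
    (h2 : (lam • (1 : Matrix (Fin n) (Fin n) ℝ) - M).PosSemidef)
    (f : Finset (Fin n) → ℝ)
    (hf : ∀ S : Finset (Fin n),
      f S = Real.log (M.submatrix (fun i : S => (i : Fin n)) (fun i : S => (i : Fin n))).det) :
    ∀ j : Fin n,
      (1 / lam) * Real.log (M j j) ≤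
        Real.log M.det -
          Real.log (M.submatrix (fun i : (Finset.univ.erase j) => (i : Fin n))
            (fun i : (Finset.univ.erase j) => (i : Fin n))).det ∧
      (1 - (1 - 1 / lam)) * (f {j} - f ∅) ≤
        f Finset.univ - f (Finset.univ.erase j) := by
  intro j
  have hdet : 0 < M.det := hpd.det_pos
  have hinv : 0 < M⁻¹ j j := hpd.inv.diag_pos
  have hdiag : lam * M⁻¹ j j + M j j ≤ lam + 1 := by
    have := (hpd.posSemidef_smul_one_sub_sub_smul_inv h1 h2).diag_nonneg (i := j)
    simp only [Matrix.sub_apply, Matrix.smul_apply, one_apply_eq, smul_eq_mul] at this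
    linarith
  have hbound : 1 / lam * Real.log (M j j) ≤ Real.log M.det -
      Real.log (M.submatrix (fun i : (Finset.univ.erase j) => (i : Fin n))
        (fun i : (Finset.univ.erase j) => (i : Fin n))).det := by
    rw [det_submatrix_erase_eq_adjugate, ← inv_apply_mul_det hdet.ne',
      Real.log_mul hinv.ne' hdet.ne']
    linarith [one_div_mul_log_le_neg_log_of_mul_add_le (by linarith) hpd.diag_pos hinv hdiag]
  exact ⟨hbound, by simpa [hf, det_submatrix_univ] using hbound⟩
end

section
/- Fix n ≥ 2 and ε > 0, and let c_1,…,c_n ∈ ℝ^n be given by c_1 = e_1 and c_j = ε·e_1 + e_j for 2 ≤ j ≤ n, where e_1,…,e_n is the standard basis. For S ⊆ {1,…,n}, let proj_S denote orthogonal projection onto span{c_i : i ∈ S} and define F(S) = ∑_{j=1}^n ‖c_j − proj_S(c_j)‖². Then: (i) F(∅) − F({1}) = 1 + ε²(n−1); and (ii) F({2,…,n}) − F({1,…,n}) ≤ min{1, 1/(ε²(n−1))}. (Since the c_j span ℝ^n, F({1,…,n}) = 0.) -/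
/-!
Only the columns outside `S` contribute to `F(S)`, and each contributes its squared distance to
`span {c_i : i ∈ S}`. For `S = {1}` the residual of `c_j = ε e_1 + e_j` is `e_j`, so `F({1}) = n - 1`
while `F(∅) = ∑ ‖c_j‖² = 1 + (n - 1)(1 + ε²)`. For `S = {2,…,n}` only `e_1` contributes, and its
distance to the span is at most its distance to `0`, and at most its distance to the rescaled sum
`(ε(n-1))⁻¹ ∑_{j ≥ 2} c_j = e_1 + (ε(n-1))⁻¹ ∑_{j ≥ 2} e_j`, whose square is `1 / (ε²(n-1))`.
-/

open Finset Submodule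
open scoped InnerProductSpace

section Projection

variable {𝕜 E : Type*} [RCLike 𝕜] [NormedAddCommGroup E] [InnerProductSpace 𝕜 E]
  (K : Submodule 𝕜 E) [K.HasOrthogonalProjection]

theorem Submodule.norm_sub_starProjection_le (y : E) {x : E} (hx : x ∈ K) :
    ‖y - K.starProjection y‖ ≤ ‖y - x‖ := by
  rw [starProjection_minimal]
  exact ciInf_le ⟨0, by rintro _ ⟨z, rfl⟩; positivity⟩ (⟨x, hx⟩ : K)

theorem Submodule.norm_sub_starProjection_of_mem {y : E} (hy : y ∈ K) :
    ‖y - K.starProjection y‖ = 0 := by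
  rw [starProjection_eq_self_iff.mpr hy, sub_self, norm_zero]

theorem Submodule.norm_sub_starProjection_span_unit {u v : E} (hu : ‖u‖ = 1) (huv : ⟪u, v⟫_𝕜 = 0)
    (a : 𝕜) : ‖a • u + v - (𝕜 ∙ u).starProjection (a • u + v)‖ = ‖v‖ := by
  rw [starProjection_unit_singleton 𝕜 hu, inner_add_right, inner_smul_right, huv,
    inner_self_eq_norm_sq_to_K, hu]
  simp

end Projection

theorem Orthonormal.norm_sum_sq {ι E : Type*} [NormedAddCommGroup E] [InnerProductSpace ℝ E]
    {v : ι → E} (hv : Orthonormal ℝ v) (s : Finset ι) : ‖∑ i ∈ s, v i‖ ^ 2 = #s := by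
  rw [← real_inner_self_eq_norm_sq]
  simpa using hv.inner_sum (fun _ => 1) (fun _ => 1) s

section ColumnSelection

variable {ι E : Type*} [Fintype ι] [NormedAddCommGroup E] [InnerProductSpace ℝ E]
  [FiniteDimensional ℝ E]

noncomputable def columnSelectionError (c : ι → E) (S : Finset ι) : ℝ :=
  ∑ j, ‖c j - (span ℝ (c '' S)).starProjection (c j)‖ ^ 2

theorem columnSelectionError_empty (c : ι → E) : columnSelectionError c ∅ = ∑ j, ‖c j‖ ^ 2 := by
  simp [columnSelectionError, starProjection_bot]

variable [DecidableEq ι]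

theorem columnSelectionError_eq_sum_compl (c : ι → E) (S : Finset ι) :
    columnSelectionError c S = ∑ j ∈ Sᶜ, ‖c j - (span ℝ (c '' S)).starProjection (c j)‖ ^ 2 := by
  rw [columnSelectionError, ← sum_add_sum_compl S, sum_eq_zero, zero_add]
  intro j hj
  rw [norm_sub_starProjection_of_mem _ (subset_span (Set.mem_image_of_mem c hj)), sq, mul_zero]

theorem columnSelectionError_univ (c : ι → E) : columnSelectionError c univ = 0 := by
  simp [columnSelectionError_eq_sum_compl]

theorem columnSelectionError_univ_erase (c : ι → E) (i : ι) :
    columnSelectionError c (univ.erase i) =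
      ‖c i - (span ℝ (c '' ↑(univ.erase i))).starProjection (c i)‖ ^ 2 := by
  rw [columnSelectionError_eq_sum_compl, ← compl_singleton, compl_compl, sum_singleton]

theorem columnSelectionError_univ_erase_le (c : ι → E) (i : ι) {x : E}
    (hx : x ∈ span ℝ (c '' ↑(univ.erase i))) :
    columnSelectionError c (univ.erase i) ≤ ‖c i - x‖ ^ 2 := by
  rw [columnSelectionError_univ_erase]
  gcongr
  exact norm_sub_starProjection_le _ _ hx

variable {e : ι → E} {i₀ : ι} {ε : ℝ} {c : ι → E}

theorem columnSelectionError_empty_of_orthonormal (he : Orthonormal ℝ e) (hc₁ : c i₀ = e i₀)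
    (hcj : ∀ j, j ≠ i₀ → c j = ε • e i₀ + e j) :
    columnSelectionError c ∅ = 1 + ((Fintype.card ι : ℝ) - 1) * (ε ^ 2 + 1) := by
  have hnorm : ∀ j ∈ univ.erase i₀, ‖c j‖ ^ 2 = ε ^ 2 + 1 := fun j hj => by
    rw [hcj j (ne_of_mem_erase hj), norm_add_sq_real, real_inner_smul_left,
      he.inner_eq_zero (ne_of_mem_erase hj).symm, norm_smul, he.1, he.1, Real.norm_eq_abs, mul_one,
      sq_abs]
    ring
  rw [columnSelectionError_empty, ← add_sum_erase _ _ (mem_univ i₀), hc₁, he.1, sum_congr rfl hnorm,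
    sum_const, nsmul_eq_mul, cast_card_erase_of_mem (mem_univ i₀), card_univ]
  ring

theorem columnSelectionError_singleton_of_orthonormal (he : Orthonormal ℝ e) (hc₁ : c i₀ = e i₀)
    (hcj : ∀ j, j ≠ i₀ → c j = ε • e i₀ + e j) :
    columnSelectionError c {i₀} = (Fintype.card ι : ℝ) - 1 := by
  have hspan : span ℝ (c '' ↑({i₀} : Finset ι)) = ℝ ∙ e i₀ := by simp [hc₁]
  have hres : ∀ j ∈ ({i₀} : Finset ι)ᶜ,
      ‖c j - (span ℝ (c '' ↑({i₀} : Finset ι))).starProjection (c j)‖ ^ 2 = 1 := fun j hj => by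
    have hj : j ≠ i₀ := by simpa using hj
    rw [hspan, hcj j hj, norm_sub_starProjection_span_unit (he.1 i₀) (he.inner_eq_zero hj.symm),
      he.1, one_pow]
  rw [columnSelectionError_eq_sum_compl, sum_congr rfl hres, sum_const, nsmul_one, compl_singleton,
    cast_card_erase_of_mem (mem_univ i₀), card_univ]

theorem columnSelectionError_univ_erase_le_one (he : Orthonormal ℝ e) (hc₁ : c i₀ = e i₀) :
    columnSelectionError c (univ.erase i₀) ≤ 1 := by
  simpa [hc₁, he.1] using columnSelectionError_univ_erase_le c i₀ (zero_mem _)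

theorem columnSelectionError_univ_erase_le_inv (he : Orthonormal ℝ e) (hc₁ : c i₀ = e i₀)
    (hcj : ∀ j, j ≠ i₀ → c j = ε • e i₀ + e j) (hε : ε ≠ 0) (hcard : 1 < Fintype.card ι) :
    columnSelectionError c (univ.erase i₀) ≤ 1 / (ε ^ 2 * ((Fintype.card ι : ℝ) - 1)) := by
  set m : ℝ := (Fintype.card ι : ℝ) - 1
  have hm : m ≠ 0 := sub_ne_zero.mpr (by exact_mod_cast hcard.ne')
  set w := ∑ j ∈ univ.erase i₀, e j
  have hsum : ∑ j ∈ univ.erase i₀, c j = (m * ε) • e i₀ + w := by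
    rw [sum_congr rfl fun j hj => hcj j (ne_of_mem_erase hj), sum_add_distrib, sum_const,
      ← Nat.cast_smul_eq_nsmul ℝ, smul_smul, cast_card_erase_of_mem (mem_univ i₀), card_univ]
  have hx : (m * ε)⁻¹ • ∑ j ∈ univ.erase i₀, c j ∈ span ℝ (c '' ↑(univ.erase i₀)) :=
    smul_mem _ _ (sum_mem fun j hj => subset_span (Set.mem_image_of_mem c hj))
  have hdiff : c i₀ - (m * ε)⁻¹ • ∑ j ∈ univ.erase i₀, c j = -((m * ε)⁻¹ • w) := by
    rw [hsum, smul_add, smul_smul, inv_mul_cancel₀ (mul_ne_zero hm hε), one_smul, hc₁]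
    abel
  have hw : ‖w‖ ^ 2 = m := by
    rw [he.norm_sum_sq, cast_card_erase_of_mem (mem_univ i₀), card_univ]
  calc columnSelectionError c (univ.erase i₀)
      ≤ ‖c i₀ - (m * ε)⁻¹ • ∑ j ∈ univ.erase i₀, c j‖ ^ 2 :=
        columnSelectionError_univ_erase_le c i₀ hx
    _ = 1 / (ε ^ 2 * m) := by
      rw [hdiff, norm_neg, norm_smul, mul_pow, hw, Real.norm_eq_abs, sq_abs]
      field_simp

end ColumnSelection

theorem stmt_19_general {n : ℕ} (hn : 2 ≤ n) (ε : ℝ) (hε : 0 < ε)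
    (i0 : Fin n)
    (c : Fin n → EuclideanSpace ℝ (Fin n))
    (hc1 : c i0 = EuclideanSpace.single i0 1)
    (hcj : ∀ j : Fin n, j ≠ i0 →
      c j = ε • EuclideanSpace.single i0 1 + EuclideanSpace.single j 1)
    (F : Finset (Fin n) → ℝ)
    (hF : ∀ S : Finset (Fin n), F S = ∑ j : Fin n,
      ‖c j - ((Submodule.span ℝ (c '' ↑S)).orthogonalProjectionOnto (c j) : EuclideanSpace ℝ (Fin n))‖ ^ 2) :
    F ∅ - F {i0} = 1 + ε ^ 2 * ((n : ℝ) - 1) ∧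
    F (Finset.univ.erase i0) - F Finset.univ ≤ min 1 (1 / (ε ^ 2 * ((n : ℝ) - 1))) ∧
    F Finset.univ = 0 := by
  have he : Orthonormal ℝ fun i : Fin n => EuclideanSpace.single i (1 : ℝ) :=
    EuclideanSpace.orthonormal_single
  obtain rfl : F = columnSelectionError c := funext hF
  have hupper := columnSelectionError_univ_erase_le_inv he hc1 hcj hε.ne' (by rwa [Fintype.card_fin])
  rw [Fintype.card_fin] at hupper
  refine ⟨?_, ?_, columnSelectionError_univ c⟩
  · rw [columnSelectionError_empty_of_orthonormal he hc1 hcj,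
      columnSelectionError_singleton_of_orthonormal he hc1 hcj, Fintype.card_fin]
    ring
  · rw [columnSelectionError_univ, sub_zero]
    exact le_min (columnSelectionError_univ_erase_le_one he hc1) hupper

/-- Tightness example for the curvature/condition-number bound: for the columns
`c_1 = e_1`, `c_j = ε·e_1 + e_j` (`j ≥ 2`) in `ℝⁿ`, the column-subset objective `F`
satisfies `F(∅) - F({1}) = 1 + ε²(n-1)`,
`F({2,…,n}) - F({1,…,n}) ≤ min{1, 1/(ε²(n-1))}`, and `F({1,…,n}) = 0`. -/
theorem stmt_19 {n : ℕ} (hn : 2 ≤ n) (ε : ℝ) (hε : 0 < ε)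
    (i0 : Fin n) (hi0 : (i0 : ℕ) = 0)
    (c : Fin n → EuclideanSpace ℝ (Fin n))
    (hc1 : c i0 = EuclideanSpace.single i0 1)
    (hcj : ∀ j : Fin n, j ≠ i0 →
      c j = ε • EuclideanSpace.single i0 1 + EuclideanSpace.single j 1)
    (F : Finset (Fin n) → ℝ)
    (hF : ∀ S : Finset (Fin n), F S = ∑ j : Fin n,
      ‖c j - ((Submodule.span ℝ (c '' ↑S)).orthogonalProjectionOnto (c j) : EuclideanSpace ℝ (Fin n))‖ ^ 2) :
    F ∅ - F {i0} = 1 + ε ^ 2 * ((n : ℝ) - 1) ∧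
    F (Finset.univ.erase i0) - F Finset.univ ≤ min 1 (1 / (ε ^ 2 * ((n : ℝ) - 1))) ∧
    F Finset.univ = 0 :=
  stmt_19_general hn ε hε i0 c hc1 hcj F hF
end
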